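/- arXiv:2302.10990 — 4 statements merged into one kernel-verified Lean document; each statement's English description precedes it below -/
import Mathlib

section
/- For every skew-symmetric linear map J on ℝⁿ and Schwartz functions f, g : ℝⁿ → ℂ, the operator L_f defined by L_f(g)(x) = (2π)^{-n/2} ∫ 𝓕(f)(w) · g(x + (1/2π)Jw) · e^{i⟨w,x⟩} dw satisfies the L²-bound ‖L_f(g)‖_{L²} ≤ (2π)^{-n/2} ‖𝓕(f)‖_{L¹} ‖g‖_{L²}. -/
open MeasureTheory Filter Topology
open scoped InnerProductSpace
open scoped ENNReal NNReal

noncomputable section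

abbrev Euc (n : ℕ) := EuclideanSpace ℝ (Fin n)

/-- Fourier transform with `(2π)^{-n/2}` normalization. -/
def FT {n : ℕ} (f : Euc n → ℂ) (ξ : Euc n) : ℂ :=
  ((2 * Real.pi) ^ (-(n : ℝ) / 2) : ℝ) *
    ∫ s : Euc n, Complex.exp (-Complex.I * (⟪s, ξ⟫_ℝ : ℂ)) * f s

open scoped FourierTransform in
lemma FT_eq_aux {n : ℕ} (f : Euc n → ℂ) (w : Euc n) :
    FT f w = ((2 * Real.pi) ^ (-(n : ℝ) / 2) : ℝ) * 𝓕 f ((2 * Real.pi)⁻¹ • w) := by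
  rw [FT, Real.fourier_eq']
  congr 1
  refine integral_congr_ae (Filter.Eventually.of_forall fun s => ?_)
  simp only [real_inner_smul_right, smul_eq_mul]
  congr 1
  push_cast
  have h : (2 * (Real.pi:ℂ)) ≠ 0 := by simp [Real.pi_ne_zero]
  have h3 : (Real.pi:ℂ) * (Real.pi:ℂ)⁻¹ = 1 :=
    mul_inv_cancel₀ (by exact_mod_cast Real.pi_ne_zero)
  congr 1
  linear_combination (Complex.I * ((⟪s,w⟫_ℝ:ℝ):ℂ)) * h3

lemma sqrt_mul_sq_aux (a b : ℝ≥0∞) :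
    (a ^ (1/(2:ℝ)) * b ^ (1/(2:ℝ))) ^ (2:ℝ) = a * b := by
  rw [ENNReal.mul_rpow_of_nonneg _ _ (by norm_num), ← ENNReal.rpow_mul, ← ENNReal.rpow_mul]
  norm_num

/-- the `L²` bound `‖L_f(g)‖ ≤ (2π)^{-n/2} ‖𝓕 f‖_{L¹} ‖g‖_{L²}` for the
Rieffel left-multiplication operator associated to a skew-symmetric `J`. -/
theorem rieffel_Lf_L2_bound {n : ℕ} (J : Euc n →ₗ[ℝ] Euc n)
    (hJ : ∀ x y : Euc n, ⟪J x, y⟫_ℝ = -⟪x, J y⟫_ℝ)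
    (f g : SchwartzMap (Euc n) ℂ) :
    eLpNorm (fun x : Euc n => ((2 * Real.pi) ^ (-(n : ℝ) / 2) : ℝ) *
        ∫ w : Euc n, FT (⇑f) w * g (x + (2 * Real.pi)⁻¹ • J w) *
          Complex.exp (Complex.I * (⟪w, x⟫_ℝ : ℂ))) 2 volume ≤
      ENNReal.ofReal (((2 * Real.pi) ^ (-(n : ℝ) / 2) : ℝ) * ∫ w : Euc n, ‖FT (⇑f) w‖) *
        eLpNorm (⇑g) 2 volume := by
  have hπ : (0:ℝ) < 2 * Real.pi := by positivity
  set c : ℝ := (2 * Real.pi) ^ (-(n : ℝ) / 2) with hcdef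
  have hc0 : 0 ≤ c := Real.rpow_nonneg hπ.le _
  set F : Euc n → ℂ := FT (⇑f) with hFdef
  have hFeq : F = fun w => (c : ℂ) *
      (SchwartzMap.fourierTransformCLM ℂ f) ((2 * Real.pi)⁻¹ • w) := by
    funext w
    rw [hFdef, FT_eq_aux]
    simp [SchwartzMap.fourierTransformCLM_apply, SchwartzMap.fourier_coe, hcdef]
  have hFc : Continuous F := by
    rw [hFeq]
    exact continuous_const.mul ((SchwartzMap.continuous _).comp (continuous_const_smul _))
  have hFint : Integrable F := by
    rw [hFeq]
    exact (((SchwartzMap.fourierTransformCLM ℂ f).integrable).comp_smul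
      (by positivity : ((2 * Real.pi)⁻¹ : ℝ) ≠ 0)).const_mul _
  set A : Euc n → ℝ≥0∞ := fun w => (‖F w‖₊ : ℝ≥0∞) with hAdef
  have hAmeas : Measurable A := hFc.measurable.nnnorm.coe_nnreal_ennreal
  have hAtop : ∀ w, A w ≠ ⊤ := fun w => ENNReal.coe_ne_top
  set G : Euc n → ℝ≥0∞ := fun x => (‖g x‖₊ : ℝ≥0∞) with hGdef
  have hGc : Continuous G := ENNReal.continuous_coe.comp (SchwartzMap.continuous g).nnnorm
  set u : Euc n → Euc n := fun w => (2 * Real.pi)⁻¹ • J w with hudef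
  have hu_cont : Continuous u := (continuous_const_smul ((2 * Real.pi)⁻¹ : ℝ)).comp J.continuous_of_finiteDimensional
  set IA : ℝ≥0∞ := ∫⁻ w, A w with hIAdef
  have hIA : IA = ENNReal.ofReal (∫ w, ‖F w‖) :=
    (ofReal_integral_norm_eq_lintegral_enorm hFint).symm
  have hIAtop : IA ≠ ⊤ := by rw [hIA]; exact ENNReal.ofReal_ne_top
  set Ig : ℝ≥0∞ := ∫⁻ x, G x ^ (2:ℝ) with hIgdef
  have hg2 : eLpNorm (⇑g) 2 volume = Ig ^ (1/(2:ℝ)) := by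
    rw [eLpNorm_eq_lintegral_rpow_enorm_toReal (by norm_num) (by norm_num)]
    norm_num [hIgdef, hGdef, enorm_eq_nnnorm]
  set Ifun : Euc n → ℂ := fun x =>
    ∫ w : Euc n, F w * g (x + u w) * Complex.exp (Complex.I * (⟪w, x⟫_ℝ : ℂ)) with hIfun
  -- pointwise bound
  have hpt : ∀ x, (‖Ifun x‖₊ : ℝ≥0∞) ≤ ∫⁻ w, A w * G (x + u w) := by
    intro x
    refine (enorm_integral_le_lintegral_enorm _).trans_eq ?_
    refine lintegral_congr fun w => ?_
    have hnorm : ‖F w * g (x + u w) * Complex.exp (Complex.I * (⟪w, x⟫_ℝ : ℂ))‖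
        = ‖F w‖ * ‖g (x + u w)‖ := by
      rw [norm_mul, norm_mul, Complex.norm_exp]
      simp
    have hnn : ‖F w * g (x + u w) * Complex.exp (Complex.I * (⟪w, x⟫_ℝ : ℂ))‖₊
        = ‖F w‖₊ * ‖g (x + u w)‖₊ := NNReal.coe_injective (by push_cast; exact hnorm)
    simp only [enorm_eq_nnnorm, hnn, ENNReal.coe_mul]
    rfl
  -- Cauchy-Schwarz in w
  have hmeasAG : ∀ x : Euc n, AEMeasurable (fun w => A w ^ (1/2:ℝ) * G (x + u w)) volume := by
    intro x
    exact ((hAmeas.pow_const _).mul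
      ((hGc.comp (continuous_const.add hu_cont)).measurable)).aemeasurable
  have hCS : ∀ x, (∫⁻ w, A w * G (x + u w)) ^ (2:ℝ)
      ≤ IA * ∫⁻ w, A w * G (x + u w) ^ (2:ℝ) := by
    intro x
    have hconj : Real.HolderConjugate 2 2 := ⟨by norm_num, by norm_num, by norm_num⟩
    have h := ENNReal.lintegral_mul_le_Lp_mul_Lq volume hconj
      ((hAmeas.pow_const (1/2:ℝ)).aemeasurable) (hmeasAG x)
    have h1 : (∫⁻ w, A w * G (x + u w))
        = ∫⁻ w, ((fun w => A w ^ (1/2:ℝ)) * fun w => A w ^ (1/2:ℝ) * G (x + u w)) w := by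
      refine lintegral_congr fun w => ?_
      simp only [Pi.mul_apply]
      rw [← mul_assoc,
        ← ENNReal.rpow_add_of_nonneg (x := A w) (y := (1/2:ℝ)) (z := (1/2:ℝ))
          (by norm_num) (by norm_num)]
      norm_num
    have h2 : (∫⁻ w, (A w ^ (1/2:ℝ)) ^ (2:ℝ)) = IA := by
      refine lintegral_congr fun w => ?_
      rw [← ENNReal.rpow_mul]; norm_num
    have h3 : (∫⁻ w, (A w ^ (1/2:ℝ) * G (x + u w)) ^ (2:ℝ))
        = ∫⁻ w, A w * G (x + u w) ^ (2:ℝ) := by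
      refine lintegral_congr fun w => ?_
      rw [ENNReal.mul_rpow_of_nonneg _ _ (by norm_num), ← ENNReal.rpow_mul]
      norm_num
    calc (∫⁻ w, A w * G (x + u w)) ^ (2:ℝ)
        ≤ ((∫⁻ w, (A w ^ (1/2:ℝ)) ^ (2:ℝ)) ^ (1/(2:ℝ))
            * (∫⁻ w, (A w ^ (1/2:ℝ) * G (x + u w)) ^ (2:ℝ)) ^ (1/(2:ℝ))) ^ (2:ℝ) := by
          rw [h1]
          exact ENNReal.rpow_le_rpow h (by norm_num)
      _ = IA * ∫⁻ w, A w * G (x + u w) ^ (2:ℝ) := by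
          rw [h2, h3, sqrt_mul_sq_aux]
  -- Tonelli + translation invariance
  have hswap : (∫⁻ x, ∫⁻ w, A w * G (x + u w) ^ (2:ℝ)) = IA * Ig := by
    rw [lintegral_lintegral_swap]
    · have : ∀ w, (∫⁻ x, A w * G (x + u w) ^ (2:ℝ)) = A w * Ig := by
        intro w
        rw [lintegral_const_mul' _ _ (hAtop w)]
        congr 1
        exact lintegral_add_right_eq_self (fun x => G x ^ (2:ℝ)) (u w)
      rw [lintegral_congr this]
      exact lintegral_mul_const'' _ hAmeas.aemeasurable
    · exact (((hAmeas.comp measurable_snd).mul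
        (((hGc.comp ((continuous_fst.add (hu_cont.comp continuous_snd)))).measurable).pow_const
          _))).aemeasurable
  -- main estimate on Ifun
  have hmain : eLpNorm Ifun 2 volume ≤ IA * eLpNorm (⇑g) 2 volume := by
    rw [eLpNorm_eq_lintegral_rpow_enorm_toReal (by norm_num) (by norm_num), hg2]
    have hb : (∫⁻ x, (‖Ifun x‖₊ : ℝ≥0∞) ^ ((2:ℝ≥0∞).toReal)) ≤ IA * (IA * Ig) := by
      calc (∫⁻ x, (‖Ifun x‖₊ : ℝ≥0∞) ^ ((2:ℝ≥0∞).toReal))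
          ≤ ∫⁻ x, (∫⁻ w, A w * G (x + u w)) ^ (2:ℝ) := by
            refine lintegral_mono fun x => ?_
            rw [show ((2:ℝ≥0∞).toReal) = (2:ℝ) by norm_num]
            exact ENNReal.rpow_le_rpow (hpt x) (by norm_num)
        _ ≤ ∫⁻ x, IA * ∫⁻ w, A w * G (x + u w) ^ (2:ℝ) := lintegral_mono fun x => hCS x
        _ = IA * (IA * Ig) := by rw [lintegral_const_mul' _ _ hIAtop, hswap]
    calc (∫⁻ x, (‖Ifun x‖₊ : ℝ≥0∞) ^ ((2:ℝ≥0∞).toReal)) ^ (1 / (2:ℝ≥0∞).toReal)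
        ≤ (IA * (IA * Ig)) ^ (1 / (2:ℝ≥0∞).toReal) := by
          exact ENNReal.rpow_le_rpow hb (by norm_num)
      _ = IA * Ig ^ (1/(2:ℝ)) := by
          rw [show (1 / (2:ℝ≥0∞).toReal) = (1/2:ℝ) by norm_num, ← mul_assoc,
            ENNReal.mul_rpow_of_nonneg _ _ (by norm_num),
            ENNReal.mul_rpow_of_nonneg _ _ (by norm_num), ← ENNReal.rpow_add_of_nonneg]
          · norm_num
          · norm_num
          · norm_num
  -- assemble
  have hLHS : eLpNorm (fun x : Euc n => (c:ℂ) * Ifun x) 2 volume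
      = (‖(c:ℂ)‖₊ : ℝ≥0∞) * eLpNorm Ifun 2 volume := by
    simpa [Pi.smul_def, smul_eq_mul, enorm_eq_nnnorm] using eLpNorm_const_smul (c:ℂ) Ifun 2 volume
  have hcnorm : (‖(c:ℂ)‖₊ : ℝ≥0∞) = ENNReal.ofReal c := by
    rw [← enorm_eq_nnnorm, ← ofReal_norm, Complex.norm_real, Real.norm_of_nonneg hc0]
  calc eLpNorm (fun x : Euc n => (c:ℂ) * Ifun x) 2 volume
      = ENNReal.ofReal c * eLpNorm Ifun 2 volume := by rw [hLHS, hcnorm]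
    _ ≤ ENNReal.ofReal c * (IA * eLpNorm (⇑g) 2 volume) :=
        mul_le_mul_right hmain _
    _ = ENNReal.ofReal (c * ∫ w, ‖F w‖) * eLpNorm (⇑g) 2 volume := by
        rw [ENNReal.ofReal_mul hc0, hIA, mul_assoc]

end
end

section
/- Let ψ ∈ C_c^∞(ℝⁿ) with ψ ≥ 0, ∫ψ = 1 and supp ψ ⊆ B(0,1), let ψ_m(ξ) = mⁿψ(mξ) and e_m = (2π)^{n/2} 𝓕^{-1}(ψ_m). Then for every Schwartz function g : ℝⁿ → ℂ, the functions L_{e_m}(g)(x) = ∫ ψ_m(ξ) g(x + (1/2π)Jξ) e^{i⟨ξ,x⟩} dξ converge to g in L²(ℝⁿ) as m → ∞. -/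
open MeasureTheory Filter Topology
open scoped InnerProductSpace ENNReal NNReal

noncomputable section

/-- norm of `exp(I t) - 1` is at most `2|t|`. -/
lemma norm_exp_I_mul_sub_one_le (t : ℝ) :
    ‖Complex.exp (Complex.I * (t : ℂ)) - 1‖ ≤ 2 * |t| := by
  rcases le_or_gt (|t|) 1 with h | h
  · have habs : ‖Complex.I * (t : ℂ)‖ = |t| := by
      simp
    have := Complex.norm_exp_sub_one_le (x := Complex.I * (t : ℂ)) (by rw [habs]; exact h)
    simpa [habs] using this
  · have h1 : ‖Complex.exp (Complex.I * (t : ℂ))‖ = 1 := by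
      rw [Complex.norm_exp]
      simp
    calc ‖Complex.exp (Complex.I * (t : ℂ)) - 1‖
        ≤ ‖Complex.exp (Complex.I * (t : ℂ))‖ + ‖(1 : ℂ)‖ := norm_sub_le _ _
      _ = 2 := by rw [h1]; norm_num
      _ ≤ 2 * |t| := by nlinarith

set_option maxHeartbeats 2000000 in
/-- the approximate identity property: for Schwartz `g`,
`L_{e_m}(g)(x) = ∫ ψ_m(ξ) g(x + (1/2π)Jξ) e^{i⟨ξ,x⟩} dξ` converges to `g` in `L²`. -/
theorem rieffel_approximate_identity_schwartz {n : ℕ} (J : Euc n →ₗ[ℝ] Euc n)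
    (hJ : ∀ x y : Euc n, ⟪J x, y⟫_ℝ = -⟪x, J y⟫_ℝ)
    (ψ : Euc n → ℝ) (hψsmooth : ContDiff ℝ (⊤ : ℕ∞) ψ) (hψcpt : HasCompactSupport ψ)
    (hψpos : ∀ ξ, 0 ≤ ψ ξ) (hψint : ∫ ξ : Euc n, ψ ξ = 1)
    (hψsupp : tsupport ψ ⊆ Metric.ball (0 : Euc n) 1)
    (ψm : ℕ → Euc n → ℝ) (hψm : ∀ m ξ, ψm m ξ = (m : ℝ) ^ n * ψ ((m : ℝ) • ξ))
    (g : SchwartzMap (Euc n) ℂ) :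
    Tendsto (fun m : ℕ =>
        eLpNorm (fun x : Euc n =>
          (∫ ξ : Euc n, (ψm m ξ : ℂ) * g (x + (2 * Real.pi)⁻¹ • J ξ) *
            Complex.exp (Complex.I * (⟪ξ, x⟫_ℝ : ℂ))) - g x) 2 volume)
      atTop (𝓝 0) := by
  classical
  set c : ℝ := (2 * Real.pi)⁻¹ with hc
  have hc0 : 0 ≤ c := by
    rw [hc]
    positivity
  set Jc : Euc n →L[ℝ] Euc n := LinearMap.toContinuousLinearMap J with hJcdef
  have hJc : ∀ ξ : Euc n, ‖J ξ‖ ≤ ‖Jc‖ * ‖ξ‖ := fun ξ => Jc.le_opNorm ξ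
  -- derivative decay bound
  obtain ⟨C₁, hC₁0, hC₁⟩ : ∃ C₁, 0 ≤ C₁ ∧ ∀ y : Euc n,
      (1 + ‖y‖) ^ (n + 1) * ‖fderiv ℝ (⇑g) y‖ ≤ C₁ := by
    refine ⟨2 ^ (n + 1) *
      (Finset.Iic ((n + 1, 1) : ℕ × ℕ)).sup (fun m => SchwartzMap.seminorm ℝ m.1 m.2) g,
      by positivity, fun y => ?_⟩
    have h := SchwartzMap.one_add_le_sup_seminorm_apply (𝕜 := ℝ)
      (m := ((n + 1, 1) : ℕ × ℕ)) (k := n + 1) (n := 1) le_rfl le_rfl g y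
    have heq : ‖iteratedFDeriv ℝ 1 (⇑g) y‖ = ‖fderiv ℝ (⇑g) y‖ := by
      rw [← norm_iteratedFDeriv_fderiv, norm_iteratedFDeriv_zero]
    rwa [heq] at h
  -- function decay bound
  obtain ⟨C₂, hC₂0, hC₂⟩ : ∃ C₂, 0 ≤ C₂ ∧ ∀ x : Euc n,
      (1 + ‖x‖) ^ (n + 2) * ‖g x‖ ≤ C₂ := by
    refine ⟨2 ^ (n + 2) *
      (Finset.Iic ((n + 2, 0) : ℕ × ℕ)).sup (fun m => SchwartzMap.seminorm ℝ m.1 m.2) g,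
      by positivity, fun x => ?_⟩
    have h := SchwartzMap.one_add_le_sup_seminorm_apply (𝕜 := ℝ)
      (m := ((n + 2, 0) : ℕ × ℕ)) (k := n + 2) (n := 0) le_rfl le_rfl g x
    rwa [norm_iteratedFDeriv_zero] at h
  -- the dominating L² function
  set β : Euc n → ℝ := fun x => ((1 + ‖x‖) ^ (n + 1))⁻¹ with hβdef
  have hβpos : ∀ x : Euc n, 0 < (1 + ‖x‖ : ℝ) := fun x => by positivity
  have hβ0 : ∀ x, 0 ≤ β x := fun x => by
    rw [hβdef]
    positivity
  have hβcont : Continuous β := by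
    apply Continuous.inv₀
    · exact (continuous_const.add continuous_norm).pow _
    · intro x
      positivity
  have hβmem : MemLp β 2 volume := by
    rw [memLp_two_iff_integrable_sq hβcont.aestronglyMeasurable]
    have hlt : (Module.finrank ℝ (Euc n) : ℝ) < ((2 * (n + 1) : ℕ) : ℝ) := by
      rw [finrank_euclideanSpace_fin]
      push_cast
      linarith
    have h := integrable_one_add_norm (E := Euc n) (μ := volume)
      (r := ((2 * (n + 1) : ℕ) : ℝ)) hlt
    refine h.congr (Eventually.of_forall fun x => ?_)
    have h1 : (0 : ℝ) ≤ 1 + ‖x‖ := by positivity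
    have h2 : (1 + ‖x‖ : ℝ) ^ (-((2 * (n + 1) : ℕ) : ℝ)) = ((1 + ‖x‖ : ℝ) ^ (2 * (n + 1) : ℕ))⁻¹ := by
      rw [Real.rpow_neg h1, Real.rpow_natCast]
    have h3 : ((1 + ‖x‖ : ℝ) ^ (2 * (n + 1) : ℕ))⁻¹ = (((1 + ‖x‖ : ℝ) ^ (n + 1))⁻¹) ^ 2 := by
      rw [inv_pow, ← pow_mul, Nat.mul_comm (n + 1) 2]
    simp only [hβdef]
    rw [h2, h3]
  set K : ℝ≥0∞ := eLpNorm β 2 volume with hKdef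
  have hK : K ≠ ⊤ := hβmem.eLpNorm_lt_top.ne
  set A : ℝ := c * ‖Jc‖ * (2 ^ (n + 1) * C₁) + 2 * C₂ with hA
  have hA0 : 0 ≤ A := by positivity
  obtain ⟨N, hN⟩ := exists_nat_ge (c * ‖Jc‖)
  set M : ℕ := max N 1 with hM
  -- main pointwise bound
  have main : ∀ m : ℕ, M ≤ m → ∀ x : Euc n,
      ‖(∫ ξ : Euc n, (ψm m ξ : ℂ) * g (x + c • J ξ) *
          Complex.exp (Complex.I * (⟪ξ, x⟫_ℝ : ℂ))) - g x‖ ≤ (A / m) * β x := by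
    intro m hm x
    have hm1 : 1 ≤ m := le_trans (le_max_right N 1) hm
    have hmR : (1 : ℝ) ≤ (m : ℝ) := by exact_mod_cast hm1
    have hmpos : (0 : ℝ) < m := by linarith
    have hcJm : c * ‖Jc‖ ≤ (m : ℝ) := by
      have : (N : ℝ) ≤ (m : ℝ) := by exact_mod_cast le_trans (le_max_left N 1) hm
      linarith
    -- support estimate
    have hsupp : ∀ ξ : Euc n, ψm m ξ ≠ 0 → ‖ξ‖ ≤ 1 / m := by
      intro ξ h0
      rw [hψm] at h0
      have h2 : ψ ((m : ℝ) • ξ) ≠ 0 := by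
        intro hz
        exact h0 (by rw [hz, mul_zero])
      have h3 : (m : ℝ) • ξ ∈ tsupport ψ := subset_closure h2
      have h4 := hψsupp h3
      have h5 : ‖(m : ℝ) • ξ‖ < 1 := by
        simpa [mem_ball_iff_norm] using h4
      rw [norm_smul, Real.norm_eq_abs, abs_of_pos hmpos] at h5
      rw [le_div_iff₀ hmpos]
      nlinarith [norm_nonneg ξ]
    have hψm_nonneg : ∀ ξ, 0 ≤ ψm m ξ := by
      intro ξ
      rw [hψm]
      exact mul_nonneg (by positivity) (hψpos _)
    have hψm_eq : ψm m = fun ξ => (m : ℝ) ^ n * ψ ((m : ℝ) • ξ) := funext (hψm m)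
    have hψm_cont : Continuous (ψm m) := by
      rw [hψm_eq]
      exact continuous_const.mul (hψsmooth.continuous.comp (continuous_const_smul (m : ℝ)))
    have hψm_cpt : HasCompactSupport (ψm m) := by
      apply HasCompactSupport.intro (isCompact_closedBall (0 : Euc n) 1)
      intro ξ hξ
      by_contra h0
      apply hξ
      have := hsupp ξ h0
      have h1m : 1 / (m : ℝ) ≤ 1 := by
        rw [div_le_one hmpos]; exact hmR
      simp only [Metric.mem_closedBall, dist_zero_right]
      exact le_trans this h1m
    have hψm_int : Integrable (ψm m) volume :=
      hψm_cont.integrable_of_hasCompactSupport hψm_cpt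
    -- total mass one
    have hψm_one : ∫ ξ : Euc n, ψm m ξ = 1 := by
      have hcs := Measure.integral_comp_smul (volume : Measure (Euc n)) ψ (m : ℝ)
      rw [hψint, finrank_euclideanSpace_fin] at hcs
      rw [hψm_eq]
      rw [integral_const_mul, hcs]
      rw [smul_eq_mul, mul_one, abs_inv, abs_of_pos (pow_pos hmpos n)]
      field_simp
    have hcoe_int : Integrable (fun ξ : Euc n => ((ψm m ξ : ℝ) : ℂ)) volume := hψm_int.ofReal
    have hcoe_one : ∫ ξ : Euc n, ((ψm m ξ : ℝ) : ℂ) = 1 := by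
      have h := integral_ofReal (𝕜 := ℂ) (f := ψm m) (μ := (volume : Measure (Euc n)))
      rw [hψm_one] at h
      exact h.trans (by norm_num)
    -- integrability of the main integrand
    have hJcont : Continuous (⇑J) := J.continuous_of_finiteDimensional
    have hGcont : Continuous fun ξ : Euc n => (ψm m ξ : ℂ) * g (x + c • J ξ) *
        Complex.exp (Complex.I * (⟪ξ, x⟫_ℝ : ℂ)) := by
      refine Continuous.mul (Continuous.mul ?_ ?_) ?_
      · exact Complex.continuous_ofReal.comp hψm_cont
      · exact g.continuous.comp (continuous_const.add (hJcont.const_smul c))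
      · refine Complex.continuous_exp.comp (continuous_const.mul ?_)
        exact Complex.continuous_ofReal.comp (continuous_id.inner continuous_const)
    have hGcpt : HasCompactSupport fun ξ : Euc n => (ψm m ξ : ℂ) * g (x + c • J ξ) *
        Complex.exp (Complex.I * (⟪ξ, x⟫_ℝ : ℂ)) := by
      have h1 : HasCompactSupport fun ξ : Euc n => ((ψm m ξ : ℝ) : ℂ) :=
        hψm_cpt.comp_left (g := fun r : ℝ => (r : ℂ)) (by simp)
      exact (h1.mul_right).mul_right
    have hGint : Integrable (fun ξ : Euc n => (ψm m ξ : ℂ) * g (x + c • J ξ) *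
        Complex.exp (Complex.I * (⟪ξ, x⟫_ℝ : ℂ))) volume :=
      hGcont.integrable_of_hasCompactSupport hGcpt
    -- rewrite the difference as one integral
    have step1 : (∫ ξ : Euc n, (ψm m ξ : ℂ) * g (x + c • J ξ) *
          Complex.exp (Complex.I * (⟪ξ, x⟫_ℝ : ℂ))) - g x
        = ∫ ξ : Euc n, (ψm m ξ : ℂ) *
            (g (x + c • J ξ) * Complex.exp (Complex.I * (⟪ξ, x⟫_ℝ : ℂ)) - g x) := by
      have e2 : ∀ ξ : Euc n, (ψm m ξ : ℂ) *
            (g (x + c • J ξ) * Complex.exp (Complex.I * (⟪ξ, x⟫_ℝ : ℂ)) - g x)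
          = (ψm m ξ : ℂ) * g (x + c • J ξ) * Complex.exp (Complex.I * (⟪ξ, x⟫_ℝ : ℂ))
            - (ψm m ξ : ℂ) * g x := by
        intro ξ; ring
      rw [show (fun ξ : Euc n => (ψm m ξ : ℂ) *
            (g (x + c • J ξ) * Complex.exp (Complex.I * (⟪ξ, x⟫_ℝ : ℂ)) - g x))
          = fun ξ : Euc n => (ψm m ξ : ℂ) * g (x + c • J ξ) *
              Complex.exp (Complex.I * (⟪ξ, x⟫_ℝ : ℂ)) - (ψm m ξ : ℂ) * g x
        from funext e2]
      rw [integral_sub hGint (hcoe_int.mul_const _)]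
      rw [integral_mul_const, hcoe_one, one_mul]
    rw [step1]
    -- pointwise bound of the integrand
    have hptwise : ∀ ξ : Euc n, ‖(ψm m ξ : ℂ) *
          (g (x + c • J ξ) * Complex.exp (Complex.I * (⟪ξ, x⟫_ℝ : ℂ)) - g x)‖
        ≤ ψm m ξ * ((A / m) * β x) := by
      intro ξ
      by_cases h0 : ψm m ξ = 0
      · simp [h0]
      · have hξ : ‖ξ‖ ≤ 1 / m := hsupp ξ h0
        have hnn := hψm_nonneg ξ
        rw [norm_mul, Complex.norm_real, Real.norm_eq_abs, abs_of_nonneg hnn]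
        refine mul_le_mul_of_nonneg_left ?_ hnn
        -- bound ‖G - g x‖
        set h : Euc n := c • J ξ with hhdef
        set t : ℝ := ⟪ξ, x⟫_ℝ with htdef
        have hhnorm : ‖h‖ ≤ c * ‖Jc‖ * ‖ξ‖ := by
          rw [hhdef, norm_smul, Real.norm_eq_abs, abs_of_nonneg hc0]
          exact mul_le_mul_of_nonneg_left (hJc ξ) hc0 |>.trans_eq (by ring)
        have hh1 : ‖h‖ ≤ 1 := by
          have h1 : c * ‖Jc‖ * ‖ξ‖ ≤ (m : ℝ) * (1 / m) := by
            apply mul_le_mul hcJm hξ (norm_nonneg ξ) (le_of_lt hmpos)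
          have h2 : (m : ℝ) * (1 / m) = 1 := by field_simp
          linarith [hhnorm]
        -- mean value estimate
        have hfb : ∀ y ∈ Metric.closedBall x 1, ‖fderiv ℝ (⇑g) y‖ ≤ 2 ^ (n + 1) * C₁ * β x := by
          intro y hy
          have hd : ‖x‖ ≤ ‖y‖ + 1 := by
            have := Metric.mem_closedBall.mp hy
            have h1 : ‖x - y‖ ≤ 1 := by rwa [← dist_eq_norm, dist_comm]
            have hyx : y + (x - y) = x := by abel
            calc ‖x‖ = ‖y + (x - y)‖ := by rw [hyx]
              _ ≤ ‖y‖ + ‖x - y‖ := norm_add_le _ _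
              _ ≤ ‖y‖ + 1 := by linarith
          have hxy : (1 + ‖x‖) ≤ 2 * (1 + ‖y‖) := by linarith [norm_nonneg y]
          have hpowle : (1 + ‖x‖) ^ (n + 1) ≤ 2 ^ (n + 1) * (1 + ‖y‖) ^ (n + 1) := by
            calc (1 + ‖x‖) ^ (n + 1) ≤ (2 * (1 + ‖y‖)) ^ (n + 1) := by
                  apply pow_le_pow_left₀ (by positivity) hxy
              _ = 2 ^ (n + 1) * (1 + ‖y‖) ^ (n + 1) := mul_pow _ _ _
          have hypos : (0 : ℝ) < (1 + ‖y‖) ^ (n + 1) := by positivity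
          have hxpos : (0 : ℝ) < (1 + ‖x‖) ^ (n + 1) := by positivity
          have hfy : ‖fderiv ℝ (⇑g) y‖ ≤ C₁ * ((1 + ‖y‖) ^ (n + 1))⁻¹ := by
            rw [← div_eq_mul_inv, le_div_iff₀ hypos]
            calc ‖fderiv ℝ (⇑g) y‖ * (1 + ‖y‖) ^ (n + 1)
                = (1 + ‖y‖) ^ (n + 1) * ‖fderiv ℝ (⇑g) y‖ := by ring
              _ ≤ C₁ := hC₁ y
          have hXY : (1 + ‖x‖) ^ (n + 1) / 2 ^ (n + 1) ≤ (1 + ‖y‖) ^ (n + 1) := by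
            rw [div_le_iff₀ (by positivity : (0:ℝ) < 2 ^ (n + 1))]
            calc (1 + ‖x‖) ^ (n + 1) ≤ 2 ^ (n + 1) * (1 + ‖y‖) ^ (n + 1) := hpowle
              _ = (1 + ‖y‖) ^ (n + 1) * 2 ^ (n + 1) := by ring
          have hii : (((1 + ‖y‖) ^ (n + 1) : ℝ))⁻¹ ≤ 2 ^ (n + 1) * ((1 + ‖x‖) ^ (n + 1))⁻¹ := by
            have hone := one_div_le_one_div_of_le
              (by positivity : (0:ℝ) < (1 + ‖x‖) ^ (n + 1) / 2 ^ (n + 1)) hXY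
            calc (((1 + ‖y‖) ^ (n + 1) : ℝ))⁻¹ = 1 / (1 + ‖y‖) ^ (n + 1) := (one_div _).symm
              _ ≤ 1 / ((1 + ‖x‖) ^ (n + 1) / 2 ^ (n + 1)) := hone
              _ = 2 ^ (n + 1) / (1 + ‖x‖) ^ (n + 1) := one_div_div _ _
              _ = 2 ^ (n + 1) * ((1 + ‖x‖) ^ (n + 1))⁻¹ := div_eq_mul_inv _ _
          calc ‖fderiv ℝ (⇑g) y‖ ≤ C₁ * ((1 + ‖y‖) ^ (n + 1))⁻¹ := hfy
            _ ≤ C₁ * (2 ^ (n + 1) * ((1 + ‖x‖) ^ (n + 1))⁻¹) :=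
                mul_le_mul_of_nonneg_left hii hC₁0
            _ = 2 ^ (n + 1) * C₁ * β x := by simp only [hβdef]; ring
        have hmvt : ‖g (x + h) - g x‖ ≤ (2 ^ (n + 1) * C₁ * β x) * ‖h‖ := by
          have hconv : Convex ℝ (Metric.closedBall x 1) := convex_closedBall x 1
          have hx0 : x ∈ Metric.closedBall x 1 := Metric.mem_closedBall_self zero_le_one
          have hxh : x + h ∈ Metric.closedBall x 1 := by
            rw [Metric.mem_closedBall, dist_eq_norm]
            simpa using hh1
          have := hconv.norm_image_sub_le_of_norm_fderiv_le
            (fun y _ => g.differentiableAt) hfb hx0 hxh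
          simpa using this
        -- exponential estimate
        have hexp : ‖Complex.exp (Complex.I * (t : ℂ)) - 1‖ ≤ 2 * ‖ξ‖ * ‖x‖ := by
          calc ‖Complex.exp (Complex.I * (t : ℂ)) - 1‖ ≤ 2 * |t| :=
              norm_exp_I_mul_sub_one_le t
            _ ≤ 2 * (‖ξ‖ * ‖x‖) := by
                have := abs_real_inner_le_norm ξ x
                rw [htdef]
                linarith
            _ = 2 * ‖ξ‖ * ‖x‖ := by ring
        have hgx : ‖x‖ * ‖g x‖ ≤ C₂ * β x := by
          have hxpos : (0 : ℝ) < (1 + ‖x‖) ^ (n + 1) := by positivity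
          have key : (1 + ‖x‖) * ‖g x‖ ≤ C₂ * β x := by
            have h2 := hC₂ x
            rw [pow_succ] at h2
            have heq : (1 + ‖x‖) * ‖g x‖ = ((1 + ‖x‖) ^ (n + 1) * (1 + ‖x‖) * ‖g x‖) * β x := by
              simp only [hβdef]
              field_simp
            rw [heq]
            exact mul_le_mul_of_nonneg_right h2 (hβ0 x)
          have hx1 : ‖x‖ * ‖g x‖ ≤ (1 + ‖x‖) * ‖g x‖ := by
            apply mul_le_mul_of_nonneg_right _ (norm_nonneg _)
            linarith [norm_nonneg x]
          linarith
        have hnormexp : ‖Complex.exp (Complex.I * (t : ℂ))‖ = 1 := by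
          rw [Complex.norm_exp]
          simp
        -- combine
        have hsplit : g (x + h) * Complex.exp (Complex.I * (t : ℂ)) - g x
            = (g (x + h) - g x) * Complex.exp (Complex.I * (t : ℂ))
              + g x * (Complex.exp (Complex.I * (t : ℂ)) - 1) := by ring
        calc ‖g (x + h) * Complex.exp (Complex.I * (t : ℂ)) - g x‖
            ≤ ‖(g (x + h) - g x) * Complex.exp (Complex.I * (t : ℂ))‖
              + ‖g x * (Complex.exp (Complex.I * (t : ℂ)) - 1)‖ := by
              rw [hsplit]; exact norm_add_le _ _
          _ = ‖g (x + h) - g x‖ + ‖g x‖ * ‖Complex.exp (Complex.I * (t : ℂ)) - 1‖ := by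
              rw [norm_mul, norm_mul, hnormexp, mul_one]
          _ ≤ (2 ^ (n + 1) * C₁ * β x) * ‖h‖ + ‖g x‖ * (2 * ‖ξ‖ * ‖x‖) := by
              apply add_le_add hmvt
              exact mul_le_mul_of_nonneg_left hexp (norm_nonneg _)
          _ ≤ (2 ^ (n + 1) * C₁ * β x) * (c * ‖Jc‖ * (1 / m))
              + (2 * (1 / m)) * (‖x‖ * ‖g x‖) := by
              apply add_le_add
              · apply mul_le_mul_of_nonneg_left _ (by positivity)
                calc ‖h‖ ≤ c * ‖Jc‖ * ‖ξ‖ := hhnorm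
                  _ ≤ c * ‖Jc‖ * (1 / m) := by
                    apply mul_le_mul_of_nonneg_left hξ (by positivity)
              · calc ‖g x‖ * (2 * ‖ξ‖ * ‖x‖) = (2 * ‖ξ‖) * (‖x‖ * ‖g x‖) := by ring
                  _ ≤ (2 * (1 / m)) * (‖x‖ * ‖g x‖) := by
                    apply mul_le_mul_of_nonneg_right _ (by positivity)
                    linarith
          _ ≤ (2 ^ (n + 1) * C₁ * β x) * (c * ‖Jc‖ * (1 / m)) + (2 * (1 / m)) * (C₂ * β x) := by
              apply add_le_add le_rfl
              apply mul_le_mul_of_nonneg_left hgx (by positivity)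
          _ = (A / m) * β x := by
              rw [hA]
              ring
    calc ‖∫ ξ : Euc n, (ψm m ξ : ℂ) *
          (g (x + c • J ξ) * Complex.exp (Complex.I * (⟪ξ, x⟫_ℝ : ℂ)) - g x)‖
        ≤ ∫ ξ : Euc n, ψm m ξ * ((A / m) * β x) :=
          norm_integral_le_of_norm_le (hψm_int.mul_const _) (Eventually.of_forall hptwise)
      _ = (A / m) * β x := by
          rw [integral_mul_const (L := ℝ), hψm_one, one_mul]
  -- eLpNorm bound
  have hbound : ∀ m : ℕ, M ≤ m →
      eLpNorm (fun x : Euc n =>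
          (∫ ξ : Euc n, (ψm m ξ : ℂ) * g (x + c • J ξ) *
            Complex.exp (Complex.I * (⟪ξ, x⟫_ℝ : ℂ))) - g x) 2 volume
        ≤ (‖A / (m : ℝ)‖₊ : ℝ≥0∞) * K := by
    intro m hm
    have h1 : eLpNorm (fun x : Euc n =>
          (∫ ξ : Euc n, (ψm m ξ : ℂ) * g (x + c • J ξ) *
            Complex.exp (Complex.I * (⟪ξ, x⟫_ℝ : ℂ))) - g x) 2 volume
        ≤ eLpNorm ((A / (m : ℝ)) • β) 2 volume := by
      apply eLpNorm_mono
      intro x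
      refine (main m hm x).trans ?_
      rw [Pi.smul_apply, smul_eq_mul, Real.norm_eq_abs]
      exact le_abs_self _
    rw [eLpNorm_const_smul] at h1
    rw [hKdef]
    exact h1
  -- the upper bound tends to zero
  have hup : Tendsto (fun m : ℕ => (‖A / (m : ℝ)‖₊ : ℝ≥0∞) * K) atTop (𝓝 0) := by
    have h1 : Tendsto (fun m : ℕ => A / (m : ℝ)) atTop (𝓝 0) :=
      tendsto_const_div_atTop_nhds_zero_nat A
    have h2 : Tendsto (fun m : ℕ => (‖A / (m : ℝ)‖₊ : ℝ≥0∞)) atTop (𝓝 0) := by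
      rw [← ENNReal.coe_zero]
      apply ENNReal.tendsto_coe.2
      have h2' := (continuous_nnnorm.tendsto (0 : ℝ)).comp h1
      rw [show ‖(0:ℝ)‖₊ = 0 from nnnorm_zero] at h2'
      exact h2'
    have h3 := ENNReal.Tendsto.mul_const h2 (Or.inr hK)
    simpa using h3
  refine tendsto_of_tendsto_of_tendsto_of_le_of_le' tendsto_const_nhds hup
    (Eventually.of_forall fun m => zero_le) ?_
  filter_upwards [eventually_ge_atTop M] with m hm using hbound m hm
end
end

section
/- Let ψ_m(ξ) = mⁿψ(mξ) with ψ ∈ C_c^∞(ℝⁿ), ψ ≥ 0, ∫ψ = 1, supp ψ ⊆ B(0,1), and define T_m : L²(ℝⁿ) → L²(ℝⁿ) by T_m(g)(x) = ∫ ψ_m(ξ) g(x + (1/2π)Jξ) e^{i⟨ξ,x⟩} dξ. Then T_m(g) → g in L²(ℝⁿ) for every g ∈ L²(ℝⁿ), and ‖T_m‖ ≤ 1 for all m. -/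
open MeasureTheory Filter Topology
open scoped InnerProductSpace

noncomputable section

open scoped ENNReal

namespace RieffelAux

variable {n : ℕ}

lemma continuous_shift (J : Euc n →ₗ[ℝ] Euc n) (c : ℝ) :
    Continuous (fun p : Euc n × Euc n => p.1 + c • J p.2) :=
  continuous_fst.add ((J.continuous_of_finiteDimensional.comp continuous_snd).const_smul c)

lemma shearQMP (J : Euc n →ₗ[ℝ] Euc n) (c : ℝ) :
    Measure.QuasiMeasurePreserving (fun p : Euc n × Euc n => p.1 + c • J p.2)
      ((volume : Measure (Euc n)).prod volume) (volume : Measure (Euc n)) := by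
  have h1 : MeasurePreserving (fun p : Euc n × Euc n => (p.1, p.2 + c • J p.1))
      ((volume : Measure (Euc n)).prod volume) ((volume : Measure (Euc n)).prod volume) := by
    refine (MeasurePreserving.id volume).skew_product (g := fun ξ x => x + c • J ξ) ?_ ?_
    · exact (continuous_snd.add
        ((J.continuous_of_finiteDimensional.comp continuous_fst).const_smul c)).measurable
    · exact Filter.Eventually.of_forall fun ξ =>
        (measurePreserving_add_right volume (c • J ξ)).map_eq
  exact (Measure.quasiMeasurePreserving_snd).comp
    ((h1.comp Measure.measurePreserving_swap).quasiMeasurePreserving)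

lemma jensen_step {w : Euc n → ℝ≥0∞} (hwm : Measurable w) (hw1 : ∫⁻ ξ, w ξ ∂volume = 1)
    {G : Euc n × Euc n → ℝ≥0∞} (hG : Measurable G) :
    ∫⁻ x, (∫⁻ ξ, w ξ * G (x, ξ) ∂volume) ^ (2:ℝ) ∂volume
      ≤ ∫⁻ ξ, w ξ * ∫⁻ x, G (x, ξ) ^ (2:ℝ) ∂volume ∂volume := by
  have hrpow : ∀ y : ℝ, Measurable (fun t : ℝ≥0∞ => t ^ y) :=
    fun y => (ENNReal.continuous_rpow_const).measurable
  have hGx : ∀ x : Euc n, Measurable fun ξ => G (x, ξ) :=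
    fun x => hG.comp (measurable_const.prodMk measurable_id)
  have hGξ : ∀ ξ : Euc n, Measurable fun x => G (x, ξ) :=
    fun ξ => hG.comp (measurable_id.prodMk measurable_const)
  have step1 : ∀ x : Euc n,
      (∫⁻ ξ, w ξ * G (x, ξ) ∂volume) ^ (2:ℝ) ≤ ∫⁻ ξ, w ξ * G (x, ξ) ^ (2:ℝ) ∂volume := by
    intro x
    have hconj : Real.HolderConjugate 2 2 := Real.HolderConjugate.two_two
    have hf : AEMeasurable (fun ξ => w ξ ^ (2:ℝ)⁻¹ * G (x, ξ)) volume :=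
      (((hrpow _).comp hwm).mul (hGx x)).aemeasurable
    have hh : AEMeasurable (fun ξ => w ξ ^ (2:ℝ)⁻¹) volume :=
      ((hrpow _).comp hwm).aemeasurable
    have H := ENNReal.lintegral_mul_le_Lp_mul_Lq volume hconj hf hh
    have e1 : ∀ ξ : Euc n,
        ((fun ξ => w ξ ^ (2:ℝ)⁻¹ * G (x, ξ)) * fun ξ => w ξ ^ (2:ℝ)⁻¹) ξ = w ξ * G (x, ξ) := by
      intro ξ
      have hw : w ξ ^ (2:ℝ)⁻¹ * w ξ ^ (2:ℝ)⁻¹ = w ξ := by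
        rw [← ENNReal.rpow_add_of_nonneg _ _ (by norm_num) (by norm_num)]
        norm_num
      calc ((fun ξ => w ξ ^ (2:ℝ)⁻¹ * G (x, ξ)) * fun ξ => w ξ ^ (2:ℝ)⁻¹) ξ
          = (w ξ ^ (2:ℝ)⁻¹ * w ξ ^ (2:ℝ)⁻¹) * G (x, ξ) := by simp [Pi.mul_apply]; ring
        _ = w ξ * G (x, ξ) := by rw [hw]
    have e2 : ∀ ξ : Euc n, (w ξ ^ (2:ℝ)⁻¹ * G (x, ξ)) ^ (2:ℝ) = w ξ * G (x, ξ) ^ (2:ℝ) := by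
      intro ξ
      rw [ENNReal.mul_rpow_of_nonneg _ _ (by norm_num), ← ENNReal.rpow_mul]
      norm_num
    have e3 : ∀ ξ : Euc n, (w ξ ^ (2:ℝ)⁻¹) ^ (2:ℝ) = w ξ := by
      intro ξ
      rw [← ENNReal.rpow_mul]; norm_num
    rw [lintegral_congr e1] at H
    simp only [e2, e3] at H
    rw [hw1, ENNReal.one_rpow, mul_one] at H
    calc (∫⁻ ξ, w ξ * G (x, ξ) ∂volume) ^ (2:ℝ)
        ≤ ((∫⁻ ξ, w ξ * G (x, ξ) ^ (2:ℝ) ∂volume) ^ (1/2 : ℝ)) ^ (2:ℝ) :=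
          ENNReal.rpow_le_rpow H (by norm_num)
      _ = ∫⁻ ξ, w ξ * G (x, ξ) ^ (2:ℝ) ∂volume := by
          rw [← ENNReal.rpow_mul]; norm_num
  calc ∫⁻ x, (∫⁻ ξ, w ξ * G (x, ξ) ∂volume) ^ (2:ℝ) ∂volume
      ≤ ∫⁻ x, ∫⁻ ξ, w ξ * G (x, ξ) ^ (2:ℝ) ∂volume ∂volume := lintegral_mono step1
    _ = ∫⁻ ξ, ∫⁻ x, w ξ * G (x, ξ) ^ (2:ℝ) ∂volume ∂volume := by
        refine lintegral_lintegral_swap ?_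
        exact ((hwm.comp measurable_snd).mul ((hrpow _).comp hG)).aemeasurable
    _ = ∫⁻ ξ, w ξ * ∫⁻ x, G (x, ξ) ^ (2:ℝ) ∂volume ∂volume :=
        lintegral_congr fun ξ => lintegral_const_mul _ ((hrpow _).comp (hGξ ξ))


lemma real_mul_nnnorm {r : ℝ} (hr : 0 ≤ r) (z : ℂ) :
    (‖(r : ℂ) * z‖₊ : ℝ≥0∞) = ENNReal.ofReal r * (‖z‖₊ : ℝ≥0∞) := by
  rw [nnnorm_mul, ENNReal.coe_mul]
  congr 1
  rw [← Real.enorm_eq_ofReal hr]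
  norm_cast

lemma exp_inner_nnnorm (r : ℝ) :
    (‖Complex.exp (Complex.I * (r : ℂ))‖₊ : ℝ≥0∞) = 1 := by
  have : ‖Complex.exp (Complex.I * (r : ℂ))‖ = 1 := by
    rw [mul_comm]; exact Complex.norm_exp_ofReal_mul_I r
  norm_cast
  ext
  simpa [coe_nnnorm] using this

lemma kernel_nnnorm {r : ℝ} (hr : 0 ≤ r) (z : ℂ) (t : ℝ) :
    (‖(r : ℂ) * z * Complex.exp (Complex.I * (t : ℂ))‖₊ : ℝ≥0∞)
      = ENNReal.ofReal r * (‖z‖₊ : ℝ≥0∞) := by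
  rw [nnnorm_mul, ENNReal.coe_mul, exp_inner_nnnorm, mul_one, real_mul_nnnorm hr]


lemma key_bound (J : Euc n →ₗ[ℝ] Euc n) (c : ℝ) {w : Euc n → ℝ≥0∞} (hwm : Measurable w)
    (hw1 : ∫⁻ ξ, w ξ ∂volume = 1) {g : Euc n → ℂ} (hg : StronglyMeasurable g) :
    ∫⁻ x, (∫⁻ ξ, w ξ * (‖g (x + c • J ξ)‖₊ : ℝ≥0∞) ∂volume) ^ (2:ℝ) ∂volume
      ≤ ∫⁻ y, (‖g y‖₊ : ℝ≥0∞) ^ (2:ℝ) ∂volume := by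
  have hG : Measurable fun p : Euc n × Euc n => (‖g (p.1 + c • J p.2)‖₊ : ℝ≥0∞) :=
    (hg.measurable.comp (continuous_shift J c).measurable).enorm
  refine (jensen_step hwm hw1 hG).trans (le_of_eq ?_)
  have htrans : ∀ ξ : Euc n,
      ∫⁻ x, (‖g (x + c • J ξ)‖₊ : ℝ≥0∞) ^ (2:ℝ) ∂volume
        = ∫⁻ y, (‖g y‖₊ : ℝ≥0∞) ^ (2:ℝ) ∂volume := by
    intro ξ
    exact (measurePreserving_add_right volume (c • J ξ)).lintegral_comp
      ((ENNReal.continuous_rpow_const).measurable.comp hg.measurable.enorm)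
  calc ∫⁻ ξ, w ξ * ∫⁻ x, (‖g (x + c • J ξ)‖₊ : ℝ≥0∞) ^ (2:ℝ) ∂volume ∂volume
      = ∫⁻ ξ, w ξ * ∫⁻ y, (‖g y‖₊ : ℝ≥0∞) ^ (2:ℝ) ∂volume ∂volume := by
        refine lintegral_congr fun ξ => ?_
        rw [htrans ξ]
    _ = (∫⁻ ξ, w ξ ∂volume) * ∫⁻ y, (‖g y‖₊ : ℝ≥0∞) ^ (2:ℝ) ∂volume :=
        lintegral_mul_const _ hwm
    _ = ∫⁻ y, (‖g y‖₊ : ℝ≥0∞) ^ (2:ℝ) ∂volume := by rw [hw1, one_mul]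

lemma contraction (J : Euc n →ₗ[ℝ] Euc n) {w : Euc n → ℝ} (hwm : Measurable w)
    (hw0 : ∀ ξ, 0 ≤ w ξ) (hw1 : ∫⁻ ξ, ENNReal.ofReal (w ξ) ∂volume = 1)
    {g : Euc n → ℂ} (hgm : AEStronglyMeasurable g volume) :
    eLpNorm (fun x => ∫ ξ, (w ξ : ℂ) * g (x + (2 * Real.pi)⁻¹ • J ξ) *
      Complex.exp (Complex.I * (⟪ξ, x⟫_ℝ : ℂ)) ∂volume) 2 volume ≤ eLpNorm g 2 volume := by
  set c : ℝ := (2 * Real.pi)⁻¹ with hc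
  set g' := hgm.mk g with hg'def
  have hg' : StronglyMeasurable g' := hgm.stronglyMeasurable_mk
  have hgg' : g =ᵐ[volume] g' := hgm.ae_eq_mk
  have hprod : (fun p : Euc n × Euc n => g (p.1 + c • J p.2))
      =ᵐ[(volume : Measure (Euc n)).prod volume]
      (fun p : Euc n × Euc n => g' (p.1 + c • J p.2)) :=
    (shearQMP J c).ae_eq_comp hgg'
  have hslice := Measure.ae_ae_of_ae_prod hprod
  rw [eLpNorm_eq_lintegral_rpow_enorm_toReal (by norm_num) (by norm_num),
    eLpNorm_eq_lintegral_rpow_enorm_toReal (by norm_num) (by norm_num)]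
  simp only [ENNReal.toReal_ofNat]
  refine ENNReal.rpow_le_rpow ?_ (by norm_num)
  calc ∫⁻ x, (‖∫ ξ, (w ξ : ℂ) * g (x + c • J ξ) *
        Complex.exp (Complex.I * (⟪ξ, x⟫_ℝ : ℂ)) ∂volume‖₊ : ℝ≥0∞) ^ (2:ℝ) ∂volume
      ≤ ∫⁻ x, (∫⁻ ξ, ENNReal.ofReal (w ξ) * (‖g (x + c • J ξ)‖₊ : ℝ≥0∞) ∂volume) ^ (2:ℝ)
          ∂volume := by
        refine lintegral_mono fun x => ENNReal.rpow_le_rpow ?_ (by norm_num)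
        refine (enorm_integral_le_lintegral_enorm _).trans (le_of_eq ?_)
        exact lintegral_congr fun ξ => kernel_nnnorm (hw0 ξ) _ _
    _ = ∫⁻ x, (∫⁻ ξ, ENNReal.ofReal (w ξ) * (‖g' (x + c • J ξ)‖₊ : ℝ≥0∞) ∂volume) ^ (2:ℝ)
          ∂volume := by
        refine lintegral_congr_ae ?_
        filter_upwards [hslice] with x hx
        congr 1
        refine lintegral_congr_ae ?_
        filter_upwards [hx] with ξ hξ
        rw [hξ]
    _ ≤ ∫⁻ y, (‖g' y‖₊ : ℝ≥0∞) ^ (2:ℝ) ∂volume :=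
        key_bound J c hwm.ennreal_ofReal hw1 hg'
    _ = ∫⁻ y, (‖g y‖₊ : ℝ≥0∞) ^ (2:ℝ) ∂volume := by
        refine lintegral_congr_ae ?_
        filter_upwards [hgg'] with y hy
        rw [hy]


lemma diff_bound (J : Euc n →ₗ[ℝ] Euc n) (c : ℝ) {w : Euc n → ℝ} (hwm : Measurable w)
    (hw0 : ∀ ξ, 0 ≤ w ξ) (hw1 : ∫⁻ ξ, ENNReal.ofReal (w ξ) ∂volume = 1)
    (hwI : Integrable w volume) (hwint : ∫ ξ, w ξ ∂volume = 1)
    {φ : Euc n → ℂ} (hφc : Continuous φ)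
    (hker : ∀ x : Euc n, Integrable (fun ξ => (w ξ : ℂ) * φ (x + c • J ξ) *
      Complex.exp (Complex.I * (⟪ξ, x⟫_ℝ : ℂ))) volume)
    {ε : ℝ≥0∞}
    (hD : ∀ ξ : Euc n, w ξ ≠ 0 →
      ∫⁻ x, (‖φ (x + c • J ξ) * Complex.exp (Complex.I * (⟪ξ, x⟫_ℝ : ℂ)) - φ x‖₊ : ℝ≥0∞) ^ (2:ℝ)
        ∂volume ≤ ε) :
    ∫⁻ x, (‖(∫ ξ, (w ξ : ℂ) * φ (x + c • J ξ) *
      Complex.exp (Complex.I * (⟪ξ, x⟫_ℝ : ℂ)) ∂volume) - φ x‖₊ : ℝ≥0∞) ^ (2:ℝ) ∂volume ≤ ε := by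
  have hpt : ∀ x : Euc n,
      (∫ ξ, (w ξ : ℂ) * φ (x + c • J ξ) * Complex.exp (Complex.I * (⟪ξ, x⟫_ℝ : ℂ)) ∂volume) - φ x
        = ∫ ξ, (w ξ : ℂ) *
            (φ (x + c • J ξ) * Complex.exp (Complex.I * (⟪ξ, x⟫_ℝ : ℂ)) - φ x) ∂volume := by
    intro x
    have h2 : Integrable (fun ξ : Euc n => (w ξ : ℂ) * φ x) volume := hwI.ofReal.mul_const _
    have h3 : ∫ ξ, (w ξ : ℂ) * φ x ∂volume = φ x := by
      simp_rw [← Complex.real_smul]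
      rw [integral_smul_const, hwint, one_smul]
    have e : (fun ξ : Euc n => (w ξ : ℂ) *
        (φ (x + c • J ξ) * Complex.exp (Complex.I * (⟪ξ, x⟫_ℝ : ℂ)) - φ x))
        = fun ξ : Euc n => (w ξ : ℂ) * φ (x + c • J ξ) *
            Complex.exp (Complex.I * (⟪ξ, x⟫_ℝ : ℂ)) - (w ξ : ℂ) * φ x :=
      funext fun ξ => by ring
    rw [e, integral_sub (hker x) h2, h3]
  have hGm : Measurable fun p : Euc n × Euc n =>
      (‖φ (p.1 + c • J p.2) * Complex.exp (Complex.I * (⟪p.2, p.1⟫_ℝ : ℂ)) - φ p.1‖₊ : ℝ≥0∞) := by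
    have hc1 : Continuous fun p : Euc n × Euc n => φ (p.1 + c • J p.2) :=
      hφc.comp (continuous_shift J c)
    have hc2 : Continuous fun p : Euc n × Euc n =>
        Complex.exp (Complex.I * (⟪p.2, p.1⟫_ℝ : ℂ)) :=
      Complex.continuous_exp.comp (continuous_const.mul
        (Complex.continuous_ofReal.comp (continuous_snd.inner continuous_fst)))
    exact ((hc1.mul hc2).sub (hφc.comp continuous_fst)).measurable.enorm
  calc ∫⁻ x, (‖(∫ ξ, (w ξ : ℂ) * φ (x + c • J ξ) *
        Complex.exp (Complex.I * (⟪ξ, x⟫_ℝ : ℂ)) ∂volume) - φ x‖₊ : ℝ≥0∞) ^ (2:ℝ) ∂volume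
      = ∫⁻ x, (‖∫ ξ, (w ξ : ℂ) *
          (φ (x + c • J ξ) * Complex.exp (Complex.I * (⟪ξ, x⟫_ℝ : ℂ)) - φ x)
            ∂volume‖₊ : ℝ≥0∞) ^ (2:ℝ) ∂volume := by
        refine lintegral_congr fun x => ?_
        rw [hpt x]
    _ ≤ ∫⁻ x, (∫⁻ ξ, ENNReal.ofReal (w ξ) *
          (‖φ (x + c • J ξ) * Complex.exp (Complex.I * (⟪ξ, x⟫_ℝ : ℂ)) - φ x‖₊ : ℝ≥0∞)
            ∂volume) ^ (2:ℝ) ∂volume := by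
        refine lintegral_mono fun x => ENNReal.rpow_le_rpow ?_ (by norm_num)
        refine (enorm_integral_le_lintegral_enorm _).trans (le_of_eq ?_)
        exact lintegral_congr fun ξ => real_mul_nnnorm (hw0 ξ) _
    _ ≤ ∫⁻ ξ, ENNReal.ofReal (w ξ) * ∫⁻ x,
          (‖φ (x + c • J ξ) * Complex.exp (Complex.I * (⟪ξ, x⟫_ℝ : ℂ)) - φ x‖₊ : ℝ≥0∞) ^ (2:ℝ)
            ∂volume ∂volume := jensen_step hwm.ennreal_ofReal hw1 hGm
    _ ≤ ∫⁻ ξ, ENNReal.ofReal (w ξ) * ε ∂volume := by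
        refine lintegral_mono fun ξ => ?_
        by_cases hw : w ξ = 0
        · simp [hw]
        · exact mul_le_mul_right (hD ξ hw) _
    _ = ε := by
        rw [lintegral_mul_const _ hwm.ennreal_ofReal, hw1, one_mul]

lemma Dtend (J : Euc n →ₗ[ℝ] Euc n) (c : ℝ) {φ : Euc n → ℂ} (hφc : Continuous φ)
    (hφs : HasCompactSupport φ) :
    Tendsto (fun ξ : Euc n => ∫⁻ x, (‖φ (x + c • J ξ) *
      Complex.exp (Complex.I * (⟪ξ, x⟫_ℝ : ℂ)) - φ x‖₊ : ℝ≥0∞) ^ (2:ℝ) ∂volume)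
      (𝓝 0) (𝓝 0) := by
  obtain ⟨M, hM⟩ := hφs.exists_bound_of_continuous hφc
  set L := LinearMap.toContinuousLinearMap J with hL
  set r : ℝ := |c| * ‖L‖ with hr
  set K : Set (Euc n) := Metric.cthickening r (tsupport φ) with hK
  have hKc : IsCompact K :=
    Metric.isCompact_of_isClosed_isBounded Metric.isClosed_cthickening
      hφs.isBounded.cthickening
  set bound : Euc n → ℝ≥0∞ := K.indicator fun _ => (ENNReal.ofReal (2 * M)) ^ (2:ℝ) with hbd
  have hcont : ∀ ξ : Euc n, Continuous fun x : Euc n =>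
      (‖φ (x + c • J ξ) * Complex.exp (Complex.I * (⟪ξ, x⟫_ℝ : ℂ)) - φ x‖₊ : ℝ≥0∞) ^ (2:ℝ) := by
    intro ξ
    refine ENNReal.continuous_rpow_const.comp ?_
    refine ENNReal.continuous_coe.comp (Continuous.nnnorm ?_)
    exact ((hφc.comp (continuous_id.add continuous_const)).mul
      (Complex.continuous_exp.comp (continuous_const.mul
        (Complex.continuous_ofReal.comp (continuous_const.inner continuous_id))))).sub hφc
  have main : Tendsto (fun ξ : Euc n => ∫⁻ x, (‖φ (x + c • J ξ) *
      Complex.exp (Complex.I * (⟪ξ, x⟫_ℝ : ℂ)) - φ x‖₊ : ℝ≥0∞) ^ (2:ℝ) ∂volume)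
      (𝓝 0) (𝓝 (∫⁻ _x : Euc n, (0:ℝ≥0∞) ∂volume)) := by
    refine tendsto_lintegral_filter_of_dominated_convergence bound ?_ ?_ ?_ ?_
    · exact Filter.Eventually.of_forall fun ξ => (hcont ξ).measurable
    · have hev : ∀ᶠ ξ : Euc n in 𝓝 0, ‖ξ‖ ≤ 1 := by
        filter_upwards [Metric.closedBall_mem_nhds (0 : Euc n) one_pos] with ξ hξ
        simpa [dist_zero_right] using hξ
      filter_upwards [hev] with ξ hξ
      refine ae_of_all _ fun x => ?_
      by_cases hx : x ∈ K
      · have hb1 : ‖φ (x + c • J ξ) * Complex.exp (Complex.I * (⟪ξ, x⟫_ℝ : ℂ)) - φ x‖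
            ≤ 2 * M := by
          have he : ‖Complex.exp (Complex.I * ((⟪ξ, x⟫_ℝ : ℝ) : ℂ))‖ = 1 := by
            rw [mul_comm]
            exact Complex.norm_exp_ofReal_mul_I _
          calc ‖φ (x + c • J ξ) * Complex.exp (Complex.I * (⟪ξ, x⟫_ℝ : ℂ)) - φ x‖
              ≤ ‖φ (x + c • J ξ) * Complex.exp (Complex.I * (⟪ξ, x⟫_ℝ : ℂ))‖ + ‖φ x‖ :=
                norm_sub_le _ _
            _ = ‖φ (x + c • J ξ)‖ + ‖φ x‖ := by rw [norm_mul, he, mul_one]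
            _ ≤ M + M := add_le_add (hM _) (hM x)
            _ = 2 * M := by ring
        have : (‖φ (x + c • J ξ) * Complex.exp (Complex.I * (⟪ξ, x⟫_ℝ : ℂ)) - φ x‖₊ : ℝ≥0∞)
            ≤ ENNReal.ofReal (2 * M) := by
          rw [← enorm_eq_nnnorm, ← ofReal_norm_eq_enorm]
          exact ENNReal.ofReal_le_ofReal hb1
        calc (‖φ (x + c • J ξ) * Complex.exp (Complex.I * (⟪ξ, x⟫_ℝ : ℂ)) - φ x‖₊ : ℝ≥0∞) ^ (2:ℝ)
            ≤ (ENNReal.ofReal (2 * M)) ^ (2:ℝ) := ENNReal.rpow_le_rpow this (by norm_num)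
          _ = bound x := by rw [hbd, Set.indicator_of_mem hx]
      · have hφx : φ x = 0 :=
          image_eq_zero_of_notMem_tsupport fun hmem => hx (Metric.self_subset_cthickening _ hmem)
        have hφx2 : φ (x + c • J ξ) = 0 := by
          refine image_eq_zero_of_notMem_tsupport fun hmem => hx ?_
          refine Metric.mem_cthickening_of_dist_le x (x + c • J ξ) r _ hmem ?_
          have hnorm : dist x (x + c • J ξ) = ‖c • J ξ‖ := by
            rw [dist_eq_norm]
            simp
          rw [hnorm, norm_smul, Real.norm_eq_abs]
          have hJle : ‖J ξ‖ ≤ ‖L‖ * ‖ξ‖ := L.le_opNorm ξ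
          calc |c| * ‖J ξ‖ ≤ |c| * (‖L‖ * ‖ξ‖) := by gcongr
            _ ≤ |c| * (‖L‖ * 1) := by gcongr
            _ = r := by rw [hr]; ring
        simp only [hφx, hφx2, zero_mul, sub_zero, zero_sub, nnnorm_neg, nnnorm_zero,
          ENNReal.coe_zero]
        rw [ENNReal.zero_rpow_of_pos (by norm_num)]
        exact zero_le
    · simp only [hbd]
      rw [lintegral_indicator hKc.measurableSet, setLIntegral_const]
      exact (ENNReal.mul_lt_top
        (ENNReal.rpow_lt_top_of_nonneg (by norm_num) ENNReal.ofReal_ne_top)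
        hKc.measure_lt_top).ne
    · refine ae_of_all _ fun x => ?_
      have h0 : (‖φ (x + c • J (0 : Euc n)) *
          Complex.exp (Complex.I * ((⟪(0 : Euc n), x⟫_ℝ : ℝ) : ℂ)) - φ x‖₊ : ℝ≥0∞) ^ (2:ℝ)
          = 0 := by
        simp [ENNReal.zero_rpow_of_pos]
      have hcξ : Continuous fun ξ : Euc n =>
          (‖φ (x + c • J ξ) * Complex.exp (Complex.I * (⟪ξ, x⟫_ℝ : ℂ)) - φ x‖₊ : ℝ≥0∞) ^ (2:ℝ) := by
        refine ENNReal.continuous_rpow_const.comp ?_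
        refine ENNReal.continuous_coe.comp (Continuous.nnnorm ?_)
        exact ((hφc.comp (continuous_const.add
          ((J.continuous_of_finiteDimensional).const_smul c))).mul
          (Complex.continuous_exp.comp (continuous_const.mul
            (Complex.continuous_ofReal.comp (continuous_id.inner continuous_const))))).sub
          continuous_const
      have := hcξ.tendsto 0
      rwa [h0] at this
  simpa using main

end RieffelAux

open RieffelAux

/-- the operators `T_m(g)(x) = ∫ ψ_m(ξ) g(x + (1/2π)Jξ) e^{i⟨ξ,x⟩} dξ` are
contractions of `L²(ℝⁿ)` and `T_m(g) → g` in `L²` for every `g ∈ L²`. -/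
theorem rieffel_approximate_identity_L2 {n : ℕ} (J : Euc n →ₗ[ℝ] Euc n)
    (hJ : ∀ x y : Euc n, ⟪J x, y⟫_ℝ = -⟪x, J y⟫_ℝ)
    (ψ : Euc n → ℝ) (hψsmooth : ContDiff ℝ (⊤ : ℕ∞) ψ) (hψcpt : HasCompactSupport ψ)
    (hψpos : ∀ ξ, 0 ≤ ψ ξ) (hψint : ∫ ξ : Euc n, ψ ξ = 1)
    (hψsupp : tsupport ψ ⊆ Metric.ball (0 : Euc n) 1)
    (ψm : ℕ → Euc n → ℝ) (hψm : ∀ m ξ, ψm m ξ = (m : ℝ) ^ n * ψ ((m : ℝ) • ξ))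
    (T : ℕ → (Euc n → ℂ) → (Euc n → ℂ))
    (hT : ∀ m g x, T m g x = ∫ ξ : Euc n, (ψm m ξ : ℂ) *
      g (x + (2 * Real.pi)⁻¹ • J ξ) * Complex.exp (Complex.I * (⟪ξ, x⟫_ℝ : ℂ))) :
    (∀ g : Euc n → ℂ, MemLp g 2 volume →
      Tendsto (fun m : ℕ => eLpNorm (fun x => T m g x - g x) 2 volume) atTop (𝓝 0)) ∧
    (∀ (m : ℕ) (g : Euc n → ℂ), MemLp g 2 volume →
      eLpNorm (T m g) 2 volume ≤ eLpNorm g 2 volume) := by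
  classical
  have hψcont : Continuous ψ := hψsmooth.continuous
  have hψI : Integrable ψ volume := hψcont.integrable_of_hasCompactSupport hψcpt
  have hwc : ∀ m : ℕ, Continuous (ψm m) := by
    intro m
    have e : ψm m = fun ξ => (m : ℝ) ^ n * ψ ((m : ℝ) • ξ) := funext (hψm m)
    rw [e]
    exact continuous_const.mul (hψcont.comp (continuous_const_smul _))
  have hw0 : ∀ m ξ, 0 ≤ ψm m ξ := by
    intro m ξ; rw [hψm]
    exact mul_nonneg (pow_nonneg (Nat.cast_nonneg m) n) (hψpos _)
  have hsmall : ∀ m : ℕ, 1 ≤ m → ∀ ξ : Euc n, ψm m ξ ≠ 0 → ‖ξ‖ < 1 / m := by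
    intro m hm ξ hξ
    rw [hψm] at hξ
    have h1 : ψ ((m : ℝ) • ξ) ≠ 0 := fun h => hξ (by rw [h, mul_zero])
    have h2 : (m : ℝ) • ξ ∈ Metric.ball (0 : Euc n) 1 :=
      hψsupp (subset_tsupport _ h1)
    rw [Metric.mem_ball, dist_zero_right, norm_smul, Real.norm_natCast] at h2
    have hmpos : (0:ℝ) < m := by exact_mod_cast hm
    rw [lt_div_iff₀ hmpos]
    linarith [h2]
  have hwcpt : ∀ m : ℕ, 1 ≤ m → HasCompactSupport (ψm m) := by
    intro m hm
    refine HasCompactSupport.intro (isCompact_closedBall (0 : Euc n) 1) fun ξ hξ => ?_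
    by_contra h
    have hlt := hsmall m hm ξ h
    have hmpos : (0:ℝ) < m := by exact_mod_cast hm
    have h1m : 1 / (m:ℝ) ≤ 1 := by
      rw [div_le_one hmpos]; exact_mod_cast hm
    exact hξ (Metric.mem_closedBall.mpr (by rw [dist_zero_right]; linarith))
  have hwI : ∀ m : ℕ, 1 ≤ m → Integrable (ψm m) volume := fun m hm =>
    (hwc m).integrable_of_hasCompactSupport (hwcpt m hm)
  have hwint : ∀ m : ℕ, 1 ≤ m → ∫ ξ, ψm m ξ ∂volume = 1 := by
    intro m hm
    have hmpos : (0:ℝ) < m := by exact_mod_cast hm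
    have e : ∫ ξ, ψm m ξ ∂volume = (m : ℝ) ^ n * ∫ ξ, ψ ((m : ℝ) • ξ) ∂volume := by
      simp_rw [hψm]
      exact integral_const_mul _ _
    rw [e, Measure.integral_comp_smul_of_nonneg (μ := volume) ψ (m : ℝ) (hR := hmpos.le), hψint]
    simp only [finrank_euclideanSpace_fin, smul_eq_mul, mul_one]
    exact mul_inv_cancel₀ (pow_ne_zero _ hmpos.ne')
  have hwL : ∀ m : ℕ, 1 ≤ m → ∫⁻ ξ, ENNReal.ofReal (ψm m ξ) ∂volume = 1 := by
    intro m hm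
    rw [← ofReal_integral_eq_lintegral_ofReal (hwI m hm) (ae_of_all _ (hw0 m)),
      hwint m hm, ENNReal.ofReal_one]
  have hψL : ∫⁻ ξ, ENNReal.ofReal (ψ ξ) ∂volume = 1 := by
    rw [← ofReal_integral_eq_lintegral_ofReal hψI (ae_of_all _ hψpos), hψint, ENNReal.ofReal_one]
  have hTfun : ∀ m g, T m g = fun x => ∫ ξ, (ψm m ξ : ℂ) *
      g (x + (2 * Real.pi)⁻¹ • J ξ) * Complex.exp (Complex.I * (⟪ξ, x⟫_ℝ : ℂ)) ∂volume :=
    fun m g => funext (hT m g)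
  have hpart2 : ∀ (m : ℕ) (g : Euc n → ℂ), MemLp g 2 volume →
      eLpNorm (T m g) 2 volume ≤ eLpNorm g 2 volume := by
    intro m g hg
    rcases Nat.eq_zero_or_pos m with hm | hm
    · subst hm
      rcases Nat.eq_zero_or_pos n with hn | hn
      · subst hn
        have hid : ψm 0 = ψ := by
          funext ξ
          rw [hψm, pow_zero, one_mul]
          congr 1
          ext i; exact i.elim0
        rw [hTfun 0 g, hid]
        exact contraction J hψcont.measurable hψpos hψL hg.1
      · have hzero : ∀ ξ : Euc n, ψm 0 ξ = 0 := by
          intro ξ; rw [hψm]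
          simp [zero_pow hn.ne']
        rw [hTfun 0 g]
        have e : (fun x : Euc n => ∫ ξ, (ψm 0 ξ : ℂ) *
            g (x + (2 * Real.pi)⁻¹ • J ξ) * Complex.exp (Complex.I * (⟪ξ, x⟫_ℝ : ℂ)) ∂volume)
            = fun _ => (0 : ℂ) := by
          funext x
          simp [hzero]
        rw [e]
        simp only [eLpNorm_zero']
        exact zero_le
    · rw [hTfun m g]
      exact contraction J (hwc m).measurable (hw0 m) (hwL m hm) hg.1
  refine ⟨?_, hpart2⟩
  intro g hg
  rw [ENNReal.tendsto_nhds_zero]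
  intro ε hε
  set ε' : ℝ≥0∞ := ε / 3 with hε'
  have hε'0 : ε' ≠ 0 := by
    simp only [hε', ne_eq, ENNReal.div_eq_zero_iff]
    push_neg
    exact ⟨hε.ne', by norm_num⟩
  obtain ⟨φ, hφs, hφsub, hφc, hφmem⟩ :=
    hg.exists_hasCompactSupport_eLpNorm_sub_le (p := 2) (by norm_num) hε'0
  have hDt := Dtend J (2 * Real.pi)⁻¹ hφc hφs
  have hε2 : (0:ℝ≥0∞) < ε' ^ (2:ℝ) := by
    rw [pos_iff_ne_zero, ne_eq, ENNReal.rpow_eq_zero_iff_of_pos (by norm_num)]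
    exact hε'0
  have hev := ENNReal.tendsto_nhds_zero.mp hDt (ε' ^ (2:ℝ)) hε2
  rw [Metric.eventually_nhds_iff] at hev
  obtain ⟨δ, hδ0, hδ⟩ := hev
  obtain ⟨N, hN⟩ := exists_nat_gt δ⁻¹
  refine Filter.eventually_atTop.mpr ⟨max N 1, fun m hm => ?_⟩
  have hm1 : 1 ≤ m := le_trans (le_max_right N 1) hm
  have hmN : (N : ℝ) ≤ m := by exact_mod_cast le_trans (le_max_left N 1) hm
  have hmpos : (0:ℝ) < m := by exact_mod_cast hm1
  have hinv : 1 / (m : ℝ) < δ := by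
    rw [one_div]
    have h1 : δ⁻¹ < (m : ℝ) := lt_of_lt_of_le hN hmN
    exact inv_lt_of_inv_lt₀ hδ0 h1
  have hDb : ∀ ξ : Euc n, ψm m ξ ≠ 0 →
      ∫⁻ x, (‖φ (x + (2 * Real.pi)⁻¹ • J ξ) *
        Complex.exp (Complex.I * (⟪ξ, x⟫_ℝ : ℂ)) - φ x‖₊ : ℝ≥0∞) ^ (2:ℝ) ∂volume
        ≤ ε' ^ (2:ℝ) := by
    intro ξ hξ
    apply hδ
    rw [dist_zero_right]
    exact lt_trans (hsmall m hm1 ξ hξ) hinv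
  have hkerφ : ∀ x : Euc n, Integrable (fun ξ => (ψm m ξ : ℂ) *
      φ (x + (2 * Real.pi)⁻¹ • J ξ) * Complex.exp (Complex.I * (⟪ξ, x⟫_ℝ : ℂ))) volume := by
    intro x
    refine Continuous.integrable_of_hasCompactSupport ?_ ?_
    · exact ((Complex.continuous_ofReal.comp (hwc m)).mul
        (hφc.comp (continuous_const.add
          ((J.continuous_of_finiteDimensional).const_smul (2 * Real.pi)⁻¹)))).mul
        (Complex.continuous_exp.comp (continuous_const.mul
          (Complex.continuous_ofReal.comp (continuous_id.inner continuous_const))))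
    · refine HasCompactSupport.intro (isCompact_closedBall (0 : Euc n) 1) fun ξ hξ => ?_
      have hz : ψm m ξ = 0 := by
        by_contra h
        have hlt := hsmall m hm1 ξ h
        have h1m : 1 / (m:ℝ) ≤ 1 := by
          rw [div_le_one hmpos]; exact_mod_cast hm1
        exact hξ (Metric.mem_closedBall.mpr (by rw [dist_zero_right]; linarith))
      simp [hz]
  have hmid : eLpNorm (fun x => T m φ x - φ x) 2 volume ≤ ε' := by
    have hb := diff_bound J (2 * Real.pi)⁻¹ (hwc m).measurable (hw0 m) (hwL m hm1)
      (hwI m hm1) (hwint m hm1) hφc hkerφ hDb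
    have hgoal : ∫⁻ x, (‖T m φ x - φ x‖₊ : ℝ≥0∞) ^ (2:ℝ) ∂volume ≤ ε' ^ (2:ℝ) := by
      simp only [hT]
      exact hb
    rw [eLpNorm_eq_lintegral_rpow_enorm_toReal (by norm_num) (by norm_num)]
    simp only [ENNReal.toReal_ofNat]
    calc (∫⁻ x, (‖T m φ x - φ x‖₊ : ℝ≥0∞) ^ (2:ℝ) ∂volume) ^ (1/(2:ℝ))
        ≤ (ε' ^ (2:ℝ)) ^ (1/(2:ℝ)) := ENNReal.rpow_le_rpow hgoal (by norm_num)
      _ = ε' := by rw [← ENNReal.rpow_mul]; norm_num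
  have hkerASM : ∀ h : Euc n → ℂ, AEStronglyMeasurable h volume →
      AEStronglyMeasurable (fun p : Euc n × Euc n => (ψm m p.2 : ℂ) *
        h (p.1 + (2 * Real.pi)⁻¹ • J p.2) * Complex.exp (Complex.I * (⟪p.2, p.1⟫_ℝ : ℂ)))
        ((volume : Measure (Euc n)).prod volume) := by
    intro h hh
    have h1 : AEStronglyMeasurable
        (fun p : Euc n × Euc n => h (p.1 + (2 * Real.pi)⁻¹ • J p.2))
        ((volume : Measure (Euc n)).prod volume) :=
      hh.comp_quasiMeasurePreserving (shearQMP J _)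
    have h2 : Continuous fun p : Euc n × Euc n => ((ψm m p.2 : ℝ) : ℂ) :=
      Complex.continuous_ofReal.comp ((hwc m).comp continuous_snd)
    have h3 : Continuous fun p : Euc n × Euc n =>
        Complex.exp (Complex.I * (⟪p.2, p.1⟫_ℝ : ℂ)) :=
      Complex.continuous_exp.comp (continuous_const.mul
        (Complex.continuous_ofReal.comp (continuous_snd.inner continuous_fst)))
    exact (h2.aestronglyMeasurable.mul h1).mul h3.aestronglyMeasurable
  have hTgASM : ∀ h : Euc n → ℂ, AEStronglyMeasurable h volume →
      AEStronglyMeasurable (T m h) volume := by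
    intro h hh
    have h1 := (hkerASM h hh).integral_prod_right'
    refine h1.congr (Filter.Eventually.of_forall fun x => ?_)
    exact (hT m h x).symm
  have hgm := hg.1
  set g' := hgm.mk g with hg'def
  have hg' : StronglyMeasurable g' := hgm.stronglyMeasurable_mk
  have hgg' : g =ᵐ[volume] g' := hgm.ae_eq_mk
  have hprod : (fun p : Euc n × Euc n => g (p.1 + (2 * Real.pi)⁻¹ • J p.2))
      =ᵐ[(volume : Measure (Euc n)).prod volume]
      (fun p : Euc n × Euc n => g' (p.1 + (2 * Real.pi)⁻¹ • J p.2)) :=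
    (shearQMP J _).ae_eq_comp hgg'
  have hslice := Measure.ae_ae_of_ae_prod hprod
  set B : Euc n → ℝ≥0∞ := fun x => ∫⁻ ξ, ENNReal.ofReal (ψm m ξ) *
    (‖g' (x + (2 * Real.pi)⁻¹ • J ξ)‖₊ : ℝ≥0∞) ∂volume with hB
  have hBmeas : Measurable B := by
    refine Measurable.lintegral_prod_right ?_
    exact (((hwc m).measurable.comp measurable_snd).ennreal_ofReal).mul
      ((hg'.measurable.comp (continuous_shift J _).measurable).enorm)
  have hgL2 : ∫⁻ y, (‖g' y‖₊ : ℝ≥0∞) ^ (2:ℝ) ∂volume < ∞ := by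
    have h1 : eLpNorm g' 2 volume < ∞ := by
      rw [← eLpNorm_congr_ae hgg']; exact hg.2
    rw [eLpNorm_eq_lintegral_rpow_enorm_toReal (by norm_num) (by norm_num)] at h1
    simp only [ENNReal.toReal_ofNat] at h1
    rwa [ENNReal.rpow_lt_top_iff_of_pos (by norm_num : (0:ℝ) < 1/2)] at h1
  have hBfin : ∀ᵐ x ∂(volume : Measure (Euc n)), B x < ∞ := by
    have hkb := key_bound J (2 * Real.pi)⁻¹ ((hwc m).measurable.ennreal_ofReal)
      (hwL m hm1) hg'
    have h2 : ∫⁻ x, B x ^ (2:ℝ) ∂volume < ∞ := lt_of_le_of_lt hkb hgL2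
    have h3 := ae_lt_top (ENNReal.continuous_rpow_const.measurable.comp hBmeas) h2.ne
    filter_upwards [h3] with x hx
    simp only [Function.comp_apply] at hx
    rwa [ENNReal.rpow_lt_top_iff_of_pos (by norm_num : (0:ℝ) < 2)] at hx
  have hsliceASM := (hkerASM g hg.1).prodMk_left
  have hInt : ∀ᵐ x ∂(volume : Measure (Euc n)), Integrable (fun ξ => (ψm m ξ : ℂ) *
      g (x + (2 * Real.pi)⁻¹ • J ξ) * Complex.exp (Complex.I * (⟪ξ, x⟫_ℝ : ℂ))) volume := by
    filter_upwards [hBfin, hslice, hsliceASM] with x h1 h2 h3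
    refine ⟨h3, ?_⟩
    have e : ∫⁻ ξ, (‖(ψm m ξ : ℂ) * g (x + (2 * Real.pi)⁻¹ • J ξ) *
        Complex.exp (Complex.I * (⟪ξ, x⟫_ℝ : ℂ))‖₊ : ℝ≥0∞) ∂volume = B x := by
      rw [hB]
      refine lintegral_congr_ae ?_
      filter_upwards [h2] with ξ hξ
      rw [kernel_nnnorm (hw0 m ξ), hξ]
    show (∫⁻ ξ, (‖(ψm m ξ : ℂ) * g (x + (2 * Real.pi)⁻¹ • J ξ) *
        Complex.exp (Complex.I * (⟪ξ, x⟫_ℝ : ℂ))‖₊ : ℝ≥0∞) ∂volume) < ∞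
    rw [e]
    exact h1
  have hae : ∀ᵐ x ∂(volume : Measure (Euc n)), T m g x - T m φ x = T m (g - φ) x := by
    filter_upwards [hInt] with x h1
    rw [hT m g x, hT m φ x, hT m (g - φ) x, ← integral_sub h1 (hkerφ x)]
    refine integral_congr_ae (Filter.Eventually.of_forall fun ξ => ?_)
    simp only [Pi.sub_apply]
    ring
  have hfirst : eLpNorm (fun x => T m g x - T m φ x) 2 volume ≤ ε' := by
    have e1 : eLpNorm (fun x => T m g x - T m φ x) 2 volume
        = eLpNorm (T m (g - φ)) 2 volume := by
      refine eLpNorm_congr_ae ?_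
      filter_upwards [hae] with x hx
      exact hx
    rw [e1, hTfun m (g - φ)]
    exact le_trans (contraction J (hwc m).measurable (hw0 m) (hwL m hm1)
      (hg.1.sub hφmem.1)) hφsub
  have hlast : eLpNorm (fun x => φ x - g x) 2 volume ≤ ε' := by
    have e : (fun x => φ x - g x) = -(g - φ) := by
      funext x; simp [Pi.sub_apply]
    rw [e, eLpNorm_neg]
    exact hφsub
  have hASM1 : AEStronglyMeasurable (fun x => T m g x - T m φ x) volume :=
    (hTgASM g hg.1).sub (hTgASM φ hφmem.1)
  have hASM2 : AEStronglyMeasurable (fun x => T m φ x - φ x) volume :=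
    (hTgASM φ hφmem.1).sub hφmem.1
  have hASM3 : AEStronglyMeasurable (fun x => φ x - g x) volume := hφmem.1.sub hg.1
  have heq : (fun x => T m g x - g x)
      = fun x => (T m g x - T m φ x) + ((T m φ x - φ x) + (φ x - g x)) := by
    funext x; ring
  calc eLpNorm (fun x => T m g x - g x) 2 volume
      = eLpNorm (fun x => (T m g x - T m φ x) + ((T m φ x - φ x) + (φ x - g x))) 2 volume := by
        rw [heq]
    _ ≤ eLpNorm (fun x => T m g x - T m φ x) 2 volume
        + eLpNorm (fun x => (T m φ x - φ x) + (φ x - g x)) 2 volume :=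
        eLpNorm_add_le hASM1 (hASM2.add hASM3) one_le_two
    _ ≤ eLpNorm (fun x => T m g x - T m φ x) 2 volume
        + (eLpNorm (fun x => T m φ x - φ x) 2 volume
          + eLpNorm (fun x => φ x - g x) 2 volume) := by
        gcongr
        exact eLpNorm_add_le hASM2 hASM3 one_le_two
    _ ≤ ε' + (ε' + ε') := add_le_add hfirst (add_le_add hmid hlast)
    _ = ε := by rw [hε', ← add_assoc, ENNReal.add_thirds]
end
end

section
/- For Schwartz functions f, g on ℝⁿ and J skew-symmetric, the two formulas L_f(g)(x) = (2π)^{-n/2} ∫ f(x − (1/2π)Jξ) 𝓕(g)(ξ) e^{i⟨ξ,x⟩} dξ and L_f(g)(x) = (2π)^{-n/2} ∫ 𝓕(f)(w) g(x + (1/2π)Jw) e^{i⟨w,x⟩} dw agree for every x ∈ ℝⁿ. -/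
open MeasureTheory Filter Topology FourierTransform Real
open scoped InnerProductSpace

noncomputable section

namespace RieffelAux

variable {n : ℕ}

lemma two_pi_pos : (0:ℝ) < 2 * Real.pi := by positivity

lemma FT_eq (f : Euc n → ℂ) (ξ : Euc n) :
    FT f ξ = ((2 * Real.pi) ^ (-(n : ℝ) / 2) : ℝ) *
      𝓕 f ((2 * Real.pi)⁻¹ • ξ) := by
  rw [FT, Real.fourier_eq']
  congr 1
  apply integral_congr_ae
  filter_upwards with s
  rw [smul_eq_mul]
  congr 1
  rw [real_inner_smul_right]
  have h2pi : (2 * Real.pi) ≠ 0 := two_pi_pos.ne'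
  have h3 : -2 * Real.pi * ((2 * Real.pi)⁻¹ * ⟪s, ξ⟫_ℝ) = -⟪s, ξ⟫_ℝ := by
    field_simp
  rw [h3]
  push_cast
  ring_nf

lemma c_mul_c : ((2 * Real.pi) ^ (-(n : ℝ) / 2) : ℝ) * ((2 * Real.pi) ^ (-(n : ℝ) / 2) : ℝ)
    * (2 * Real.pi) ^ (n : ℕ) = 1 := by
  rw [← Real.rpow_add two_pi_pos, ← Real.rpow_natCast (2 * Real.pi) n,
    ← Real.rpow_add two_pi_pos]
  norm_num

lemma integrable_FT (f : SchwartzMap (Euc n) ℂ) : Integrable (FT ⇑f) := by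
  have := (SchwartzMap.fourierTransformCLM ℝ f).integrable (μ := volume)
  rw [SchwartzMap.fourierTransformCLM_apply, SchwartzMap.fourier_coe] at this
  have h2 : Integrable (fun ξ : Euc n => 𝓕 (⇑f) ((2 * Real.pi)⁻¹ • ξ)) :=
    (integrable_comp_smul_iff volume (𝓕 ⇑f) (inv_ne_zero two_pi_pos.ne')).2 this
  have := h2.const_mul (((2 * Real.pi) ^ (-(n : ℝ) / 2) : ℝ) : ℂ)
  exact this.congr (by filter_upwards with ξ; rw [FT_eq])

/-- Fourier inversion for the `FT` normalization. -/
lemma inversion (f : SchwartzMap (Euc n) ℂ) (y : Euc n) :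
    (((2 * Real.pi) ^ (-(n : ℝ) / 2) : ℝ) : ℂ) *
      ∫ w : Euc n, FT (⇑f) w * Complex.exp (Complex.I * (⟪w, y⟫_ℝ : ℂ)) = f y := by
  set c : ℝ := ((2 * Real.pi) ^ (-(n : ℝ) / 2) : ℝ) with hc
  set G : Euc n → ℂ := fun u => 𝓕 (⇑f) u *
      Complex.exp (Complex.I * ((2 * Real.pi * ⟪u, y⟫_ℝ : ℝ) : ℂ)) with hG
  have key : ∀ w : Euc n, FT (⇑f) w * Complex.exp (Complex.I * (⟪w, y⟫_ℝ : ℂ))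
      = (c : ℂ) * G ((2 * Real.pi)⁻¹ • w) := by
    intro w
    rw [FT_eq, hG]
    simp only
    rw [real_inner_smul_left]
    rw [show (2:ℝ) * Real.pi * ((2 * Real.pi)⁻¹ * ⟪w, y⟫_ℝ) = ⟪w, y⟫_ℝ by
      field_simp]
    ring
  rw [integral_congr_ae (Filter.Eventually.of_forall key), integral_const_mul]
  have hcv : ∫ w : Euc n, G ((2 * Real.pi)⁻¹ • w)
      = ((2 * Real.pi) ^ (Module.finrank ℝ (Euc n)) : ℝ) • ∫ u, G u :=
    Measure.integral_comp_inv_smul_of_nonneg volume G two_pi_pos.le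
  rw [hcv]
  have hG_int : ∫ u, G u = f y := by
    have h1 : ∫ u, G u = 𝓕⁻ (𝓕 ⇑f) y := by
      rw [Real.fourierInv_eq']
      apply integral_congr_ae
      filter_upwards with u
      rw [hG]
      simp only [smul_eq_mul]
      ring
    rw [h1]
    have hint : Integrable (𝓕 ⇑f) := by
      have := (SchwartzMap.fourierTransformCLM ℝ f).integrable (μ := volume)
      rwa [SchwartzMap.fourierTransformCLM_apply, SchwartzMap.fourier_coe] at this
    exact f.integrable.fourierInv_fourier_eq hint f.continuous.continuousAt
  rw [hG_int]
  have hrank : Module.finrank ℝ (Euc n) = n := finrank_euclideanSpace_fin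
  rw [hrank]
  rw [Complex.real_smul]
  have hreal : c * (c * (2 * Real.pi) ^ (n:ℕ)) = 1 := by
    rw [← mul_assoc]; exact c_mul_c
  rw [show (c:ℂ) * ((c:ℂ) * ((((2 * Real.pi) ^ (n:ℕ) : ℝ) : ℂ) * f y))
      = ((c * (c * (2 * Real.pi) ^ (n:ℕ)) : ℝ) : ℂ) * f y by push_cast; ring]
  rw [hreal]
  simp

end RieffelAux

/-- for Schwartz `f, g` and skew-symmetric `J`, the two formulas for
Rieffel's operator `L_f(g)` agree:
`(2π)^{-n/2}∫ f(x − (1/2π)Jξ) 𝓕(g)(ξ) e^{i⟨ξ,x⟩} dξ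
  = (2π)^{-n/2}∫ 𝓕(f)(w) g(x + (1/2π)Jw) e^{i⟨w,x⟩} dw`. -/
theorem rieffel_Lf_two_formulas_agree {n : ℕ} (J : Euc n →ₗ[ℝ] Euc n)
    (hJ : ∀ x y : Euc n, ⟪J x, y⟫_ℝ = -⟪x, J y⟫_ℝ)
    (f g : SchwartzMap (Euc n) ℂ) (x : Euc n) :
    ((2 * Real.pi) ^ (-(n : ℝ) / 2) : ℝ) *
        (∫ ξ : Euc n, f (x - (2 * Real.pi)⁻¹ • J ξ) * FT (⇑g) ξ *
          Complex.exp (Complex.I * (⟪ξ, x⟫_ℝ : ℂ))) =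
      ((2 * Real.pi) ^ (-(n : ℝ) / 2) : ℝ) *
        ∫ w : Euc n, FT (⇑f) w * g (x + (2 * Real.pi)⁻¹ • J w) *
          Complex.exp (Complex.I * (⟪w, x⟫_ℝ : ℂ)) := by
  classical
  set a : ℝ := (2 * Real.pi)⁻¹ with ha
  set c : ℝ := ((2 * Real.pi) ^ (-(n : ℝ) / 2) : ℝ) with hc
  -- the common kernel
  set K : Euc n → Euc n → ℂ := fun ξ w =>
    Complex.exp (Complex.I * ((⟪w, x⟫_ℝ - a * ⟪w, J ξ⟫_ℝ + ⟪ξ, x⟫_ℝ : ℝ) : ℂ)) *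
      (FT (⇑g) ξ * FT (⇑f) w) with hK
  have hJc : Continuous J := J.continuous_of_finiteDimensional
  -- integrability of the kernel on the product space
  have hKint : Integrable (Function.uncurry K) ((volume : Measure (Euc n)).prod volume) := by
    have hbase : Integrable (fun p : Euc n × Euc n => FT (⇑g) p.1 * FT (⇑f) p.2)
        ((volume : Measure (Euc n)).prod volume) :=
      (RieffelAux.integrable_FT g).mul_prod (RieffelAux.integrable_FT f)
    have hcontE : Continuous (fun p : Euc n × Euc n =>
        Complex.exp (Complex.I * ((⟪p.2, x⟫_ℝ - a * ⟪p.2, J p.1⟫_ℝ + ⟪p.1, x⟫_ℝ : ℝ) : ℂ))) := by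
      apply Complex.continuous_exp.comp
      apply Continuous.mul continuous_const
      apply Continuous.comp Complex.continuous_ofReal
      exact ((continuous_snd.inner continuous_const).sub
        (continuous_const.mul (continuous_snd.inner (hJc.comp continuous_fst)))).add
        (continuous_fst.inner continuous_const)
    apply hbase.bdd_mul (c := 1) hcontE.aestronglyMeasurable
    refine Filter.Eventually.of_forall (fun p => ?_)
    rw [Complex.norm_exp]
    simp
  -- step 1: rewrite LHS integrand
  have step1 : ∀ ξ : Euc n, f (x - a • J ξ) * FT (⇑g) ξ *
      Complex.exp (Complex.I * (⟪ξ, x⟫_ℝ : ℂ)) = (c : ℂ) * ∫ w, K ξ w := by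
    intro ξ
    have hinv := RieffelAux.inversion f (x - a • J ξ)
    rw [← hc] at hinv
    rw [← hinv]
    rw [show ((c:ℂ) * ∫ w, FT (⇑f) w *
        Complex.exp (Complex.I * (⟪w, x - a • J ξ⟫_ℝ : ℂ))) * FT (⇑g) ξ *
        Complex.exp (Complex.I * (⟪ξ, x⟫_ℝ : ℂ))
      = (c:ℂ) * ((∫ w, FT (⇑f) w * Complex.exp (Complex.I * (⟪w, x - a • J ξ⟫_ℝ : ℂ))) *
          (FT (⇑g) ξ * Complex.exp (Complex.I * (⟪ξ, x⟫_ℝ : ℂ)))) by ring]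
    congr 1
    rw [← integral_mul_const]
    apply integral_congr_ae
    filter_upwards with w
    rw [hK]
    simp only
    rw [inner_sub_right, real_inner_smul_right]
    rw [show (Complex.I * ((⟪w, x⟫_ℝ - a * ⟪w, J ξ⟫_ℝ + ⟪ξ, x⟫_ℝ : ℝ) : ℂ))
        = Complex.I * ((⟪w, x⟫_ℝ - a * ⟪w, J ξ⟫_ℝ : ℝ) : ℂ) + Complex.I * ((⟪ξ, x⟫_ℝ : ℝ) : ℂ) by
      push_cast; ring]
    rw [Complex.exp_add]
    ring
  -- step 2: rewrite RHS integrand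
  have step2 : ∀ w : Euc n, FT (⇑f) w * g (x + a • J w) *
      Complex.exp (Complex.I * (⟪w, x⟫_ℝ : ℂ)) = (c : ℂ) * ∫ ξ, K ξ w := by
    intro w
    have hinv := RieffelAux.inversion g (x + a • J w)
    rw [← hc] at hinv
    rw [← hinv]
    rw [show FT (⇑f) w * ((c:ℂ) * ∫ ξ, FT (⇑g) ξ *
        Complex.exp (Complex.I * (⟪ξ, x + a • J w⟫_ℝ : ℂ))) *
        Complex.exp (Complex.I * (⟪w, x⟫_ℝ : ℂ))
      = (c:ℂ) * ((∫ ξ, FT (⇑g) ξ * Complex.exp (Complex.I * (⟪ξ, x + a • J w⟫_ℝ : ℂ))) *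
          (FT (⇑f) w * Complex.exp (Complex.I * (⟪w, x⟫_ℝ : ℂ)))) by ring]
    congr 1
    rw [← integral_mul_const]
    apply integral_congr_ae
    filter_upwards with ξ
    rw [hK]
    simp only
    rw [inner_add_right, real_inner_smul_right]
    have hskew : ⟪ξ, J w⟫_ℝ = -⟪w, J ξ⟫_ℝ := by
      rw [real_inner_comm]; exact hJ w ξ
    rw [hskew]
    rw [show (Complex.I * ((⟪w, x⟫_ℝ - a * ⟪w, J ξ⟫_ℝ + ⟪ξ, x⟫_ℝ : ℝ) : ℂ))
        = Complex.I * ((⟪ξ, x⟫_ℝ + a * -⟪w, J ξ⟫_ℝ : ℝ) : ℂ)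
          + Complex.I * ((⟪w, x⟫_ℝ : ℝ) : ℂ) by push_cast; ring]
    rw [Complex.exp_add]
    ring
  -- Fubini
  have fubini : ∫ ξ, ∫ w, K ξ w = ∫ w, ∫ ξ, K ξ w := integral_integral_swap hKint
  calc (c:ℂ) * ∫ ξ : Euc n, f (x - a • J ξ) * FT (⇑g) ξ *
          Complex.exp (Complex.I * (⟪ξ, x⟫_ℝ : ℂ))
      = (c:ℂ) * ∫ ξ : Euc n, (c:ℂ) * ∫ w, K ξ w := by
        rw [integral_congr_ae (Filter.Eventually.of_forall step1)]
    _ = (c:ℂ) * ((c:ℂ) * ∫ ξ, ∫ w, K ξ w) := by rw [integral_const_mul]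
    _ = (c:ℂ) * ((c:ℂ) * ∫ w, ∫ ξ, K ξ w) := by rw [fubini]
    _ = (c:ℂ) * ∫ w : Euc n, (c:ℂ) * ∫ ξ, K ξ w := by rw [integral_const_mul]
    _ = (c:ℂ) * ∫ w : Euc n, FT (⇑f) w * g (x + a • J w) *
          Complex.exp (Complex.I * (⟪w, x⟫_ℝ : ℂ)) := by
        rw [integral_congr_ae (Filter.Eventually.of_forall step2)]
end
end
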